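/- arXiv:2603.14211 — 8 statements merged into one kernel-verified Lean document; each statement's English description precedes it below -/
import Mathlib

section
/- Let d ≥ 1 and T > 0. Let a : ℝ^d → ℝ^d be continuously differentiable and ν : ℝ^d → ℝ be continuously differentiable. Let X : [0,T] → ℝ^d be differentiable with X'(t) = a(X(t)) for all t ∈ [0,T]. Let g : [0,T] × ℝ^d → ℝ be twice continuously differentiable and satisfy the adjoint transport equation ∂_t g(t,x) + ⟨a(x), ∇_x g(t,x)⟩ = 0 for all (t,x) ∈ [0,T] × ℝ^d, with terminal condition g(T,x) = ν(x) for all x. Let Y : [0,T] → ℝ^d be differentiable with Y'(t) = −(Da(X(t)))ᵀ Y(t) for all t ∈ [0,T] and Y(T) = ∇ν(X(T)). Then Y(t) = ∇_x g(t, X(t)) for all t ∈ [0,T]. -/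
open MeasureTheory Set
open scoped RealInnerProductSpace BigOperators

noncomputable section

/-- `Euc d` is the Euclidean space `ℝ^d`. -/
abbrev Euc (d : ℕ) := EuclideanSpace ℝ (Fin d)

set_option maxHeartbeats 1000000

/-- For the linear transport equation, the particle-level adjoint
variable `Y` solving the adjoint ODE equals the spatial gradient of the PDE adjoint `g`
evaluated along the characteristic `X`. -/
theorem adjoint_ode_eq_gradient_along_characteristic
    (d : ℕ) (hd : 1 ≤ d) (T : ℝ) (hT : 0 < T)
    (a : Euc d → Euc d) (ha : ContDiff ℝ 1 a)
    (ν : Euc d → ℝ) (hν : ContDiff ℝ 1 ν)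
    (X : ℝ → Euc d)
    (hX : ∀ t ∈ Icc (0 : ℝ) T, HasDerivAt X (a (X t)) t)
    (g : ℝ → Euc d → ℝ)
    (hg : ContDiff ℝ 2 (fun p : ℝ × Euc d => g p.1 p.2))
    (hgPDE : ∀ t ∈ Icc (0 : ℝ) T, ∀ x : Euc d,
      deriv (fun s => g s x) t + ⟪a x, gradient (g t) x⟫ = 0)
    (hgT : ∀ x : Euc d, g T x = ν x)
    (Y : ℝ → Euc d)
    (hY : ∀ t ∈ Icc (0 : ℝ) T,
      HasDerivAt Y (-(ContinuousLinearMap.adjoint (fderiv ℝ a (X t)) (Y t))) t)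
    (hYT : Y T = gradient ν (X T)) :
    ∀ t ∈ Icc (0 : ℝ) T, Y t = gradient (g t) (X t) := by
  classical
  set G : ℝ × Euc d → ℝ := fun p => g p.1 p.2 with hGdef
  have hGd : Differentiable ℝ G := hg.differentiable two_ne_zero
  have hF2 : ContDiff ℝ 1 (fderiv ℝ G) := hg.fderiv_right (le_refl 2)
  have hF2d : Differentiable ℝ (fderiv ℝ G) := hF2.differentiable one_ne_zero
  set D2 : ℝ × Euc d → (ℝ × Euc d) →L[ℝ] (ℝ × Euc d) →L[ℝ] ℝ := fderiv ℝ (fderiv ℝ G)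
    with hD2def
  -- ψ maps a linear functional on ℝ × Euc d to the vector representing its spatial part
  set ψ : ((ℝ × Euc d) →L[ℝ] ℝ) →L[ℝ] Euc d :=
    ∑ i : Fin d, (ContinuousLinearMap.apply ℝ ℝ
      ((0 : ℝ), (EuclideanSpace.single i (1 : ℝ) : Euc d))).smulRight
        (EuclideanSpace.single i (1 : ℝ)) with hψdef
  have hsingle : ∀ v : Euc d,
      ((0 : ℝ), v) = ∑ i : Fin d, v i • ((0 : ℝ), (EuclideanSpace.single i (1 : ℝ) : Euc d)) := by
    intro v
    have h2 : ∑ i : Fin d, v i • (EuclideanSpace.single i (1 : ℝ) : Euc d) = v := by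
      have h := (EuclideanSpace.basisFun (Fin d) ℝ).sum_repr v
      simpa [EuclideanSpace.basisFun_repr, EuclideanSpace.basisFun_apply] using h
    simp only [Prod.smul_mk, smul_zero]
    rw [Prod.ext_iff]
    constructor
    · simp [Prod.fst_sum]
    · simp only [Prod.snd_sum]
      exact h2.symm
  have hinnerψ : ∀ (W : (ℝ × Euc d) →L[ℝ] ℝ) (v : Euc d), ⟪ψ W, v⟫ = W (0, v) := by
    intro W v
    rw [hψdef]
    simp only [ContinuousLinearMap.sum_apply, ContinuousLinearMap.smulRight_apply,
      ContinuousLinearMap.apply_apply, sum_inner, real_inner_smul_left,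
      EuclideanSpace.inner_single_left, conj_trivial, one_mul]
    rw [hsingle v, map_sum]
    simp only [_root_.map_smul, smul_eq_mul]
    exact Finset.sum_congr rfl fun i _ => mul_comm _ _
  -- the slice derivative
  have hslice : ∀ (t : ℝ) (x : Euc d),
      HasFDerivAt (g t) ((fderiv ℝ G (t, x)).comp (ContinuousLinearMap.inr ℝ ℝ (Euc d))) x := by
    intro t x
    exact (hGd (t, x)).hasFDerivAt.comp x (hasFDerivAt_prodMk_right t x)
  have hgradinner : ∀ (t : ℝ) (x v : Euc d),
      ⟪gradient (g t) x, v⟫ = fderiv ℝ G (t, x) (0, v) := by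
    intro t x v
    have hdiff : DifferentiableAt ℝ (g t) x := (hslice t x).differentiableAt
    have h1 := hdiff.hasGradientAt.hasFDerivAt
    have h2 := h1.unique (hslice t x)
    have h3 := congrArg (fun L : Euc d →L[ℝ] ℝ => L v) h2
    simpa [InnerProductSpace.toDual_apply_apply] using h3
  have hgrad : ∀ (t : ℝ) (x : Euc d), gradient (g t) x = ψ (fderiv ℝ G (t, x)) :=
    fun t x => ext_inner_right ℝ fun v => by rw [hgradinner, hinnerψ]
  -- derivative of x ↦ fderiv ℝ G (t, x)
  have hF2x : ∀ (t : ℝ) (x : Euc d),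
      HasFDerivAt (fun y => fderiv ℝ G (t, y))
        ((D2 (t, x)).comp (ContinuousLinearMap.inr ℝ ℝ (Euc d))) x := by
    intro t x
    exact (hF2d (t, x)).hasFDerivAt.comp x (hasFDerivAt_prodMk_right t x)
  -- time derivative of g via fderiv of G
  have htime : ∀ (t : ℝ) (x : Euc d),
      deriv (fun s => g s x) t = fderiv ℝ G (t, x) (1, 0) := by
    intro t x
    have h : HasDerivAt (fun s => g s x) (fderiv ℝ G (t, x) (1, 0)) t := by
      have := (hGd (t, x)).hasFDerivAt.comp_hasDerivAt t ((hasDerivAt_id t).prodMk (hasDerivAt_const t x))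
      exact this
    exact h.deriv
  -- symmetry of the second derivative
  have hsymm : ∀ (p : ℝ × Euc d) (v w : ℝ × Euc d), D2 p v w = D2 p w v := by
    intro p v w
    exact second_derivative_symmetric (fun y => (hGd y).hasFDerivAt) ((hF2d p).hasFDerivAt) v w
  -- differentiating the PDE in space
  have key : ∀ t ∈ Icc (0 : ℝ) T, ∀ (x : Euc d) (v : Euc d),
      D2 (t, x) (0, v) (1, 0) + (D2 (t, x) (0, v) (0, a x)
        + ⟪fderiv ℝ a x v, gradient (g t) x⟫) = 0 := by
    intro t ht x v
    have had : HasFDerivAt a (fderiv ℝ a x) x := (ha.differentiable one_ne_zero x).hasFDerivAt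
    have hgr : HasFDerivAt (fun y => gradient (g t) y)
        (ψ.comp ((D2 (t, x)).comp (ContinuousLinearMap.inr ℝ ℝ (Euc d)))) x := by
      have h := ψ.hasFDerivAt.comp x (hF2x t x)
      exact h.congr_of_eventuallyEq (Filter.Eventually.of_forall fun y => (hgrad t y))
    have hd2 : HasFDerivAt (fun y => ⟪a y, gradient (g t) y⟫)
        ((fderivInnerCLM ℝ (a x, gradient (g t) x)).comp
          ((fderiv ℝ a x).prod (ψ.comp ((D2 (t, x)).comp
            (ContinuousLinearMap.inr ℝ ℝ (Euc d)))))) x := had.inner ℝ hgr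
    have hd1 : HasFDerivAt (fun y : Euc d => deriv (fun s => g s y) t)
        ((ContinuousLinearMap.apply ℝ ℝ ((1 : ℝ), (0 : Euc d))).comp
          ((D2 (t, x)).comp (ContinuousLinearMap.inr ℝ ℝ (Euc d)))) x := by
      have h := (ContinuousLinearMap.apply ℝ ℝ ((1 : ℝ), (0 : Euc d))).hasFDerivAt.comp x
        (hF2x t x)
      exact h.congr_of_eventuallyEq (Filter.Eventually.of_forall fun y => (htime t y))
    have hsum := hd1.add hd2
    have hzero : HasFDerivAt
        (fun y : Euc d => deriv (fun s => g s y) t + ⟪a y, gradient (g t) y⟫)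
        (0 : Euc d →L[ℝ] ℝ) x := by
      have h : (fun y : Euc d => deriv (fun s => g s y) t + ⟪a y, gradient (g t) y⟫)
          = fun _ : Euc d => (0 : ℝ) := funext fun y => hgPDE t ht y
      rw [h]
      exact hasFDerivAt_const 0 x
    have hEq := hsum.unique hzero
    have hv := congrArg (fun (L : Euc d →L[ℝ] ℝ) => L v) hEq
    simp only [ContinuousLinearMap.add_apply, ContinuousLinearMap.coe_comp',
      Function.comp_apply, ContinuousLinearMap.prod_apply, ContinuousLinearMap.inr_apply,
      ContinuousLinearMap.apply_apply, fderivInnerCLM_apply,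
      ContinuousLinearMap.zero_apply] at hv
    have hax : ⟪a x, ψ ((D2 (t, x)) (0, v))⟫ = D2 (t, x) (0, v) (0, a x) := by
      rw [real_inner_comm]
      exact hinnerψ _ _
    rw [hax] at hv
    linarith [hv]
  -- define Z, the gradient along the characteristic
  set Z : ℝ → Euc d := fun t => gradient (g t) (X t) with hZdef
  -- derivative of Z
  have hZ' : ∀ t ∈ Icc (0 : ℝ) T,
      HasDerivAt Z (-(ContinuousLinearMap.adjoint (fderiv ℝ a (X t)) (Z t))) t := by
    intro t ht
    have hφ : HasDerivAt (fun s => fderiv ℝ G (s, X s)) (D2 (t, X t) (1, a (X t))) t :=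
      (hF2d (t, X t)).hasFDerivAt.comp_hasDerivAt t ((hasDerivAt_id t).prodMk (hX t ht))
    have hZder : HasDerivAt Z (ψ (D2 (t, X t) (1, a (X t)))) t := by
      have h := ψ.hasFDerivAt.comp_hasDerivAt t hφ
      exact h.congr_of_eventuallyEq (Filter.Eventually.of_forall fun s => (hgrad s (X s)))
    have hval : ψ (D2 (t, X t) (1, a (X t)))
        = -(ContinuousLinearMap.adjoint (fderiv ℝ a (X t)) (Z t)) := by
      apply ext_inner_right ℝ
      intro v
      rw [hinnerψ]
      have h1 : D2 (t, X t) (1, a (X t)) (0, v) = D2 (t, X t) (0, v) (1, a (X t)) :=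
        hsymm _ _ _
      have h2 : D2 (t, X t) (0, v) (1, a (X t))
          = D2 (t, X t) (0, v) (1, 0) + D2 (t, X t) (0, v) (0, a (X t)) := by
        have hdecomp : ((1 : ℝ), a (X t)) = ((1 : ℝ), (0 : Euc d)) + ((0 : ℝ), a (X t)) := by
          simp
        rw [hdecomp, map_add]
      have h3 := key t ht (X t) v
      have h4 : ⟪-(ContinuousLinearMap.adjoint (fderiv ℝ a (X t)) (Z t)), v⟫
          = -⟪fderiv ℝ a (X t) v, Z t⟫ := by
        rw [inner_neg_left, ContinuousLinearMap.adjoint_inner_left, real_inner_comm]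
      rw [h1, h2, h4, hZdef]
      simp only
      linarith [h3]
    rw [← hval]
    exact hZder
  -- ODE uniqueness, backwards from time T
  have hXcont : ContinuousOn X (Icc 0 T) := fun t ht => (hX t ht).continuousAt.continuousWithinAt
  have hfda : Continuous (fderiv ℝ a) := (ha.fderiv_right (m := 0) (by norm_num)).continuous
  obtain ⟨M, hM⟩ := isCompact_Icc.exists_bound_of_continuousOn
    (hfda.comp_continuousOn hXcont)
  set vf : ℝ → Euc d → Euc d := fun t y =>
    -(ContinuousLinearMap.adjoint (fderiv ℝ a (X (min (max t 0) T))) y) with hvfdef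
  have hclamp : ∀ t ∈ Icc (0 : ℝ) T, min (max t 0) T = t := by
    intro t ht
    rw [max_eq_left ht.1, min_eq_left ht.2]
  have hlip : ∀ t : ℝ, LipschitzWith M.toNNReal (vf t) := by
    intro t
    have hmem : min (max t 0) T ∈ Icc (0 : ℝ) T :=
      ⟨le_min (le_max_right t 0) hT.le, min_le_right _ _⟩
    have hM0 : 0 ≤ M := le_trans (norm_nonneg _) (hM _ hmem)
    have hnorm : ‖-(ContinuousLinearMap.adjoint (fderiv ℝ a (X (min (max t 0) T))))‖ ≤ M := by
      rw [norm_neg, LinearIsometryEquiv.norm_map]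
      exact hM _ hmem
    have hL := (-(ContinuousLinearMap.adjoint (fderiv ℝ a (X (min (max t 0) T))))).lipschitz
    refine hL.weaken ?_
    rw [← NNReal.coe_le_coe, coe_nnnorm, Real.coe_toNNReal _ hM0]
    exact hnorm
  have hYeq : ∀ t ∈ Ioc (0 : ℝ) T, HasDerivWithinAt Y (vf t (Y t)) (Iic t) t := by
    intro t ht
    have hc := hclamp t (Ioc_subset_Icc_self ht)
    show HasDerivWithinAt Y
      (-(ContinuousLinearMap.adjoint (fderiv ℝ a (X (min (max t 0) T))) (Y t))) (Iic t) t
    rw [hc]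
    exact (hY t (Ioc_subset_Icc_self ht)).hasDerivWithinAt
  have hZeq : ∀ t ∈ Ioc (0 : ℝ) T, HasDerivWithinAt Z (vf t (Z t)) (Iic t) t := by
    intro t ht
    have hc := hclamp t (Ioc_subset_Icc_self ht)
    show HasDerivWithinAt Z
      (-(ContinuousLinearMap.adjoint (fderiv ℝ a (X (min (max t 0) T))) (Z t))) (Iic t) t
    rw [hc]
    exact (hZ' t (Ioc_subset_Icc_self ht)).hasDerivWithinAt
  have hb : Y T = Z T := by
    have hgTfun : g T = ν := funext hgT
    rw [hYT, hZdef]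
    simp only
    rw [hgTfun]
  have hmain : EqOn Y Z (Icc 0 T) :=
    ODE_solution_unique_of_mem_Icc_left (s := fun _ => (univ : Set (Euc d)))
      (fun t _ => (hlip t).lipschitzOnWith)
      (fun t ht => (hY t ht).continuousAt.continuousWithinAt)
      hYeq (fun t _ => mem_univ _)
      (fun t ht => (hZ' t ht).continuousAt.continuousWithinAt)
      hZeq (fun t _ => mem_univ _)
      hb
  intro t ht
  exact hmain ht
end
end

section
/- Let d ≥ 1 and T > 0. Let a : ℝ^d → ℝ^d be continuously differentiable with bounded Jacobian, ã : ℝ^d → ℝ^d continuous and bounded, and ν : ℝ^d → ℝ continuously differentiable with bounded gradient. Let μ₀ be a Borel probability measure on ℝ^d. Let Φ : [0,T] × ℝ^d → ℝ^d be continuous with Φ(0,y) = y and ∂_t Φ(t,y) = a(Φ(t,y)) for all (t,y). Let g : [0,T] × ℝ^d → ℝ be twice continuously differentiable with bounded spatial gradient, satisfying ∂_t g(t,x) + ⟨a(x), ∇_x g(t,x)⟩ = 0 for all (t,x) and g(T,x) = ν(x). For each y ∈ ℝ^d let t ↦ Y(t,y) ∈ ℝ^d be differentiable with ∂_t Y(t,y)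 = −(Da(Φ(t,y)))ᵀ Y(t,y) and Y(T,y) = ∇ν(Φ(T,y)). Then ∫₀^T ∫_{ℝ^d} ⟨∇_x g(t,x), ã(x)⟩ d((Φ(t,·))_#μ₀)(x) dt = ∫_{ℝ^d} ( ∫₀^T ⟨Y(t,y), ã(Φ(t,y))⟩ dt ) dμ₀(y), where (Φ(t,·))_#μ₀ denotes the pushforward of μ₀ by the time-t flow map. -/
open MeasureTheory Set
open scoped RealInnerProductSpace BigOperators

noncomputable section

variable {d : ℕ}

-- the gradient-extraction CLM
def psi (d : ℕ) : ((ℝ × Euc d) →L[ℝ] ℝ) →L[ℝ] Euc d :=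
  ((InnerProductSpace.toDual ℝ (Euc d)).symm.toContinuousLinearEquiv.toContinuousLinearMap).comp
    ((ContinuousLinearMap.compL ℝ (Euc d) (ℝ × Euc d) ℝ).flip (ContinuousLinearMap.inr ℝ ℝ (Euc d)))

theorem psi_inner (L : (ℝ × Euc d) →L[ℝ] ℝ) (v : Euc d) : ⟪psi d L, v⟫ = L ((0:ℝ), v) := by
  simp [psi, InnerProductSpace.toDual_symm_apply]

theorem grad_eq_psi {g : ℝ → Euc d → ℝ} (hg : ContDiff ℝ 2 (fun p : ℝ × Euc d => g p.1 p.2))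
    (t : ℝ) (x : Euc d) :
    gradient (g t) x = psi d (fderiv ℝ (fun p : ℝ × Euc d => g p.1 p.2) (t, x)) := by
  have h1 : HasFDerivAt (g t)
      ((fderiv ℝ (fun p : ℝ × Euc d => g p.1 p.2) (t, x)).comp (ContinuousLinearMap.inr ℝ ℝ (Euc d))) x :=
    ((hg.differentiable two_ne_zero (t,x)).hasFDerivAt).comp x (hasFDerivAt_prodMk_right t x)
  simp only [gradient, h1.fderiv, psi]
  simp

theorem Ncont1 {g : ℝ → Euc d → ℝ} (hg : ContDiff ℝ 2 (fun p : ℝ × Euc d => g p.1 p.2)) :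
    ContDiff ℝ 1 (fun p : ℝ × Euc d => gradient (g p.1) p.2) := by
  have h : (fun p : ℝ × Euc d => gradient (g p.1) p.2)
      = fun p => psi d (fderiv ℝ (fun p : ℝ × Euc d => g p.1 p.2) p) :=
    funext fun p => grad_eq_psi hg p.1 p.2
  rw [h]
  exact (psi d).contDiff.comp (hg.fderiv_right (by norm_num))

set_option maxHeartbeats 1000000 in
theorem keyB {T : ℝ} {a : Euc d → Euc d} {g : ℝ → Euc d → ℝ} {Φ : ℝ → Euc d → Euc d}
    (ha : ContDiff ℝ 1 a)
    (hg : ContDiff ℝ 2 (fun p : ℝ × Euc d => g p.1 p.2))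
    (hgPDE : ∀ t ∈ Icc (0 : ℝ) T, ∀ x : Euc d,
      deriv (fun s => g s x) t + ⟪a x, gradient (g t) x⟫ = 0)
    {t : ℝ} (ht : t ∈ Icc (0:ℝ) T) (y : Euc d)
    (hΦt : HasDerivAt (fun s => Φ s y) (a (Φ t y)) t) :
    HasDerivAt (fun s => gradient (g s) (Φ s y))
      (-(ContinuousLinearMap.adjoint (fderiv ℝ a (Φ t y)) (gradient (g t) (Φ t y)))) t := by
  set G : ℝ × Euc d → ℝ := fun p => g p.1 p.2 with hGdef
  set x₀ : Euc d := Φ t y with hx₀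
  set w : Euc d := a x₀ with hw
  set A : Euc d →L[ℝ] Euc d := fderiv ℝ a x₀ with hA
  set D : ℝ × Euc d → ((ℝ × Euc d) →L[ℝ] ℝ) := fderiv ℝ G with hDdef
  have hGdiff : Differentiable ℝ G := hg.differentiable two_ne_zero
  have hDC1 : ContDiff ℝ 1 D := hg.fderiv_right (by norm_num)
  set D2 : (ℝ × Euc d) →L[ℝ] ((ℝ × Euc d) →L[ℝ] ℝ) := fderiv ℝ D (t, x₀) with hD2def
  have hD2at : HasFDerivAt D D2 (t, x₀) := (hDC1.differentiable one_ne_zero (t, x₀)).hasFDerivAt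
  -- curve derivative
  have hcurve : HasDerivAt (fun s => ((s : ℝ), Φ s y)) ((1:ℝ), w) t :=
    (hasDerivAt_id t).prodMk hΦt
  -- derivative of the composed gradient
  have hNeq : (fun s : ℝ => gradient (g s) (Φ s y)) = fun s => psi d (D (s, Φ s y)) :=
    funext fun s => grad_eq_psi hg s (Φ s y)
  have hZ : HasDerivAt (fun s => gradient (g s) (Φ s y)) (((psi d).comp D2) ((1:ℝ), w)) t := by
    rw [hNeq]
    exact ((psi d).hasFDerivAt.comp (t, x₀) hD2at).comp_hasDerivAt t hcurve
  suffices hkey : ((psi d).comp D2) ((1:ℝ), w)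
      = -(ContinuousLinearMap.adjoint (fderiv ℝ a (Φ t y)) (gradient (g t) (Φ t y))) by
    rwa [hkey] at hZ
  apply ext_inner_right ℝ
  intro v
  -- abbreviations
  set n₀ : Euc d := gradient (g t) x₀ with hn₀
  -- symmetry of second derivative
  have hsymm : D2 ((1:ℝ), w) ((0:ℝ), v) = D2 ((0:ℝ), v) ((1:ℝ), w) :=
    (hg.contDiffAt.isSymmSndFDerivAt (by simp)) _ _
  -- derivative of x ↦ D (t, x) (1, w), way 1
  have hev : HasFDerivAt (fun x : Euc d => D (t, x) ((1:ℝ), w))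
      ((((ContinuousLinearMap.apply ℝ ℝ ((1:ℝ), w)).comp D2).comp
        (ContinuousLinearMap.inr ℝ ℝ (Euc d)))) x₀ :=
    (((ContinuousLinearMap.apply ℝ ℝ ((1:ℝ), w)).hasFDerivAt.comp (t, x₀) hD2at)).comp x₀
      (hasFDerivAt_prodMk_right t x₀)
  -- the function equals the PDE-given expression
  have hNxAt : HasFDerivAt (fun x : Euc d => gradient (g t) x)
      ((fderiv ℝ (fun p : ℝ × Euc d => gradient (g p.1) p.2) (t, x₀)).comp
        (ContinuousLinearMap.inr ℝ ℝ (Euc d))) x₀ := by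
    have hNu := Ncont1 hg
    exact ((hNu.differentiable one_ne_zero (t, x₀)).hasFDerivAt).comp x₀ (hasFDerivAt_prodMk_right t x₀)
  set Bx := (fderiv ℝ (fun p : ℝ × Euc d => gradient (g p.1) p.2) (t, x₀)).comp
        (ContinuousLinearMap.inr ℝ ℝ (Euc d)) with hBx
  have haAt : HasFDerivAt a A x₀ := (ha.differentiable one_ne_zero x₀).hasFDerivAt
  have hR1 : HasFDerivAt (fun x : Euc d => (inner ℝ (gradient (g t) x) w : ℝ))
      ((fderivInnerCLM ℝ (n₀, w)).comp (Bx.prod 0)) x₀ :=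
    hNxAt.inner ℝ (hasFDerivAt_const w x₀)
  have hR2 : HasFDerivAt (fun x : Euc d => (inner ℝ (a x) (gradient (g t) x) : ℝ))
      ((fderivInnerCLM ℝ (w, n₀)).comp (A.prod Bx)) x₀ :=
    haAt.inner ℝ hNxAt
  have hRder := hR1.sub hR2
  -- function equality from the PDE
  have hfun : (fun x : Euc d => D (t, x) ((1:ℝ), w))
      = fun x : Euc d => (inner ℝ (gradient (g t) x) w : ℝ) - inner ℝ (a x) (gradient (g t) x) := by
    funext x
    have hsplit : ((1:ℝ), w) = ((1:ℝ), (0 : Euc d)) + ((0:ℝ), w) := by simp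
    have h10 : D (t, x) ((1:ℝ), (0:Euc d)) = deriv (fun s => g s x) t := by
      have hc : HasDerivAt (fun s : ℝ => ((s:ℝ), x)) ((1:ℝ), (0:Euc d)) t :=
        (hasDerivAt_id t).prodMk (hasDerivAt_const t x)
      have h1 : HasDerivAt (fun s => g s x) (D (t, x) ((1:ℝ), (0:Euc d))) t :=
        by have h := (hGdiff (t, x)).hasFDerivAt.comp_hasDerivAt t hc; exact h
      exact (h1.deriv).symm
    have h0w : D (t, x) ((0:ℝ), w) = (inner ℝ (gradient (g t) x) w : ℝ) := by
      rw [grad_eq_psi hg t x, psi_inner]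
    have hpde := hgPDE t ht x
    rw [hsplit, map_add, h10, h0w]
    linarith
  rw [hfun] at hev
  have huniq := hev.unique hRder
  have happ := congrArg (fun (L : Euc d →L[ℝ] ℝ) => L v) huniq
  simp only [ContinuousLinearMap.coe_comp', Function.comp_apply,
    ContinuousLinearMap.inr_apply, ContinuousLinearMap.apply_apply,
    ContinuousLinearMap.sub_apply, fderivInnerCLM_apply, ContinuousLinearMap.prod_apply,
    ContinuousLinearMap.zero_apply, inner_zero_right] at happ
  -- happ : D2 (0, v) (1, w) = (0 + ⟪Bx v, w⟫) - (⟪w, Bx v⟫ + ⟪A v, n₀⟫)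
  have hDNv : (inner ℝ (((psi d).comp D2) ((1:ℝ), w)) v : ℝ) = D2 ((1:ℝ), w) ((0:ℝ), v) := by
    rw [ContinuousLinearMap.comp_apply, psi_inner]
  rw [hDNv, hsymm, happ]
  rw [real_inner_comm (Bx v) w]
  have : (inner ℝ (A v) n₀ : ℝ) = inner ℝ (ContinuousLinearMap.adjoint A n₀) v := by
    rw [ContinuousLinearMap.adjoint_inner_left, real_inner_comm]
  rw [inner_neg_left, ← this]
  ring

theorem keyC {T : ℝ} (hT : 0 < T) {a : Euc d → Euc d} {g : ℝ → Euc d → ℝ}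
    {Φ : ℝ → Euc d → Euc d} {Y : ℝ → Euc d → Euc d} {ν : Euc d → ℝ}
    (ha : ContDiff ℝ 1 a) {Ca : ℝ} (hCa : ∀ x : Euc d, ‖fderiv ℝ a x‖ ≤ Ca)
    (hg : ContDiff ℝ 2 (fun p : ℝ × Euc d => g p.1 p.2))
    (hgPDE : ∀ t ∈ Icc (0 : ℝ) T, ∀ x : Euc d,
      deriv (fun s => g s x) t + ⟪a x, gradient (g t) x⟫ = 0)
    (hgT : ∀ x : Euc d, g T x = ν x)
    (hΦc : Continuous (fun p : ℝ × Euc d => Φ p.1 p.2))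
    (hΦode : ∀ t ∈ Icc (0 : ℝ) T, ∀ y : Euc d,
      HasDerivAt (fun s => Φ s y) (a (Φ t y)) t)
    (hY : ∀ y : Euc d, ∀ t ∈ Icc (0 : ℝ) T,
      HasDerivAt (fun s => Y s y)
        (-(ContinuousLinearMap.adjoint (fderiv ℝ a (Φ t y)) (Y t y))) t)
    (hYT : ∀ y : Euc d, Y T y = gradient ν (Φ T y))
    (y : Euc d) : ∀ t ∈ Icc (0:ℝ) T, gradient (g t) (Φ t y) = Y t y := by
  set v : ℝ → Euc d → Euc d :=
    fun t z => -(ContinuousLinearMap.adjoint (fderiv ℝ a (Φ t y)) z) with hv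
  have hCa0 : 0 ≤ Ca := (norm_nonneg _).trans (hCa 0)
  have hlip : ∀ t : ℝ, LipschitzOnWith Ca.toNNReal (v t) univ := by
    intro t
    apply LipschitzWith.lipschitzOnWith
    apply LipschitzWith.of_dist_le_mul
    intro z z'
    have : dist (v t z) (v t z')
        = ‖(ContinuousLinearMap.adjoint (fderiv ℝ a (Φ t y))) (z - z')‖ := by
      rw [dist_eq_norm]
      rw [map_sub]
      simp [hv]
      rw [← norm_neg]
      congr 1
      abel
    rw [this, dist_eq_norm]
    calc ‖(ContinuousLinearMap.adjoint (fderiv ℝ a (Φ t y))) (z - z')‖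
        ≤ ‖ContinuousLinearMap.adjoint (fderiv ℝ a (Φ t y))‖ * ‖z - z'‖ :=
          ContinuousLinearMap.le_opNorm _ _
      _ ≤ (Ca.toNNReal : ℝ) * ‖z - z'‖ := by
          apply mul_le_mul_of_nonneg_right _ (norm_nonneg _)
          rw [LinearIsometryEquiv.norm_map]
          exact (hCa _).trans (by simp [Real.coe_toNNReal _ hCa0])
  have hZcont : Continuous fun t => gradient (g t) (Φ t y) := by
    have h1 : Continuous fun t : ℝ => ((t : ℝ), Φ t y) := by
      refine continuous_id.prodMk ?_
      exact hΦc.comp (continuous_id.prodMk continuous_const)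
    exact (Ncont1 hg).continuous.comp h1
  have heq : EqOn (fun t => gradient (g t) (Φ t y)) (fun t => Y t y) (Icc 0 T) := by
    apply ODE_solution_unique_of_mem_Icc_left (v := v) (s := fun _ => (univ : Set (Euc d))) (fun t _ => hlip t)
      hZcont.continuousOn
      (fun t ht => (keyB ha hg hgPDE (Ioc_subset_Icc_self ht) y
        (hΦode t (Ioc_subset_Icc_self ht) y)).hasDerivWithinAt)
      (fun t _ => mem_univ _)
      (fun t ht => ((hY y t ht).continuousAt.continuousWithinAt))
      (fun t ht => (hY y t (Ioc_subset_Icc_self ht)).hasDerivWithinAt)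
      (fun t _ => mem_univ _)
    show gradient (g T) (Φ T y) = Y T y
    have : g T = ν := funext hgT
    rw [this, hYT y]
  exact fun t ht => heq ht


/-- (Theorem 2.1(b), tested form.) For the linear transport equation with
initial distribution `μ₀`, the first variation of the PDE objective with respect to the
velocity field, tested against a direction `a'`, equals the `μ₀`-average over initial
positions of the particle-level tested first variation. -/
theorem pde_gradient_eq_average_particle_gradient
    (d : ℕ) (hd : 1 ≤ d) (T : ℝ) (hT : 0 < T)
    (a a' : Euc d → Euc d)
    (ha : ContDiff ℝ 1 a) (haJ : ∃ C, ∀ x : Euc d, ‖fderiv ℝ a x‖ ≤ C)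
    (ha'c : Continuous a') (ha'b : ∃ C, ∀ x : Euc d, ‖a' x‖ ≤ C)
    (ν : Euc d → ℝ) (hν : ContDiff ℝ 1 ν)
    (hνg : ∃ C, ∀ x : Euc d, ‖gradient ν x‖ ≤ C)
    (μ₀ : Measure (Euc d)) (hμ₀ : IsProbabilityMeasure μ₀)
    (Φ : ℝ → Euc d → Euc d)
    (hΦc : Continuous (fun p : ℝ × Euc d => Φ p.1 p.2))
    (hΦ0 : ∀ y : Euc d, Φ 0 y = y)
    (hΦode : ∀ t ∈ Icc (0 : ℝ) T, ∀ y : Euc d,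
      HasDerivAt (fun s => Φ s y) (a (Φ t y)) t)
    (g : ℝ → Euc d → ℝ)
    (hg : ContDiff ℝ 2 (fun p : ℝ × Euc d => g p.1 p.2))
    (hgrad : ∃ C, ∀ t ∈ Icc (0 : ℝ) T, ∀ x : Euc d, ‖gradient (g t) x‖ ≤ C)
    (hgPDE : ∀ t ∈ Icc (0 : ℝ) T, ∀ x : Euc d,
      deriv (fun s => g s x) t + ⟪a x, gradient (g t) x⟫ = 0)
    (hgT : ∀ x : Euc d, g T x = ν x)
    (Y : ℝ → Euc d → Euc d)
    (hY : ∀ y : Euc d, ∀ t ∈ Icc (0 : ℝ) T,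
      HasDerivAt (fun s => Y s y)
        (-(ContinuousLinearMap.adjoint (fderiv ℝ a (Φ t y)) (Y t y))) t)
    (hYT : ∀ y : Euc d, Y T y = gradient ν (Φ T y)) :
    (∫ t in (0 : ℝ)..T, ∫ x, ⟪gradient (g t) x, a' x⟫ ∂(μ₀.map (Φ t)))
      = ∫ y, (∫ t in (0 : ℝ)..T, ⟪Y t y, a' (Φ t y)⟫) ∂μ₀ := by

  obtain ⟨Ca, hCa⟩ := haJ
  obtain ⟨Ca', hCa'⟩ := ha'b
  obtain ⟨Cg, hCg⟩ := hgrad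
  have hCg0 : 0 ≤ Cg := (norm_nonneg _).trans (hCg 0 ⟨le_rfl, hT.le⟩ 0)
  have hCa'0 : 0 ≤ Ca' := (norm_nonneg _).trans (hCa' 0)
  have hNc : Continuous fun p : ℝ × Euc d => gradient (g p.1) p.2 := (Ncont1 hg).continuous
  -- F
  set F : ℝ → Euc d → ℝ := fun t y => ⟪gradient (g t) (Φ t y), a' (Φ t y)⟫ with hF
  have hFc : Continuous fun p : ℝ × Euc d => F p.1 p.2 := by
    apply Continuous.inner
    · exact hNc.comp (continuous_fst.prodMk hΦc)
    · exact ha'c.comp hΦc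
  -- step 1: pushforward
  have hmap : ∀ t : ℝ, (∫ x, ⟪gradient (g t) x, a' x⟫ ∂(μ₀.map (Φ t)))
      = ∫ y, F t y ∂μ₀ := by
    intro t
    have hφm : AEMeasurable (Φ t) μ₀ :=
      (hΦc.comp (continuous_const.prodMk continuous_id)).measurable.aemeasurable
    have hsm : AEStronglyMeasurable (fun x => (⟪gradient (g t) x, a' x⟫ : ℝ)) (μ₀.map (Φ t)) := by
      apply Continuous.aestronglyMeasurable
      exact Continuous.inner (hNc.comp (continuous_const.prodMk continuous_id)) ha'c
    exact integral_map hφm hsm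
  have step1 : (∫ t in (0 : ℝ)..T, ∫ x, ⟪gradient (g t) x, a' x⟫ ∂(μ₀.map (Φ t)))
      = ∫ t in (0:ℝ)..T, ∫ y, F t y ∂μ₀ :=
    intervalIntegral.integral_congr (fun t _ => hmap t)
  -- integrability on the product
  have hfin : IsFiniteMeasure (volume.restrict (Ioc (0:ℝ) T)) := by
    constructor
    rw [Measure.restrict_apply_univ, Real.volume_Ioc]
    exact ENNReal.ofReal_lt_top
  have hInt : Integrable (Function.uncurry F) ((volume.restrict (Ioc (0:ℝ) T)).prod μ₀) := by
    have hae : ∀ᵐ p : ℝ × Euc d ∂((volume.restrict (Ioc (0:ℝ) T)).prod μ₀),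
        p.1 ∈ Ioc (0:ℝ) T := by
      rw [Measure.restrict_prod_eq_prod_univ]
      have := ae_restrict_mem (μ := volume.prod μ₀)
        ((measurableSet_Ioc : MeasurableSet (Ioc (0:ℝ) T)).prod MeasurableSet.univ)
      filter_upwards [this] with p hp
      exact hp.1
    apply Integrable.mono' (g := fun _ => Cg * Ca') (integrable_const _)
      (hFc.aestronglyMeasurable)
    filter_upwards [hae] with p hp
    have h1 : ‖gradient (g p.1) (Φ p.1 p.2)‖ ≤ Cg := hCg p.1 (Ioc_subset_Icc_self hp) _
    have h2 : ‖a' (Φ p.1 p.2)‖ ≤ Ca' := hCa' _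
    calc ‖Function.uncurry F p‖ ≤ ‖gradient (g p.1) (Φ p.1 p.2)‖ * ‖a' (Φ p.1 p.2)‖ :=
          norm_inner_le_norm _ _
      _ ≤ Cg * Ca' := mul_le_mul h1 h2 (norm_nonneg _) hCg0
  -- step 2: swap
  have step2 : (∫ t in (0:ℝ)..T, ∫ y, F t y ∂μ₀)
      = ∫ y, (∫ t in (0:ℝ)..T, F t y) ∂μ₀ := by
    rw [intervalIntegral.integral_of_le hT.le]
    rw [integral_integral_swap hInt]
    congr 1
    funext y
    rw [intervalIntegral.integral_of_le hT.le]
  -- step 3: replace the gradient by Y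
  have step3 : ∀ y : Euc d, (∫ t in (0:ℝ)..T, F t y)
      = ∫ t in (0:ℝ)..T, ⟪Y t y, a' (Φ t y)⟫ := by
    intro y
    apply intervalIntegral.integral_congr
    intro t ht
    rw [uIcc_of_le hT.le] at ht
    simp only [hF]
    rw [keyC hT ha hCa hg hgPDE hgT hΦc hΦode hY hYT y t ht]
  rw [step1, step2]
  exact integral_congr_ae (Filter.Eventually.of_forall fun y => step3 y)
end
end

section
/- Let d ≥ 1 and T > 0. Let a, ã : ℝ^d → ℝ^d be continuously differentiable, and ν : ℝ^d → ℝ continuously differentiable. Let f : [0,T] × ℝ^d → ℝ and f̃ : [0,T] × ℝ^d → ℝ be continuously differentiable, and suppose there exists R > 0 such that f(t,x) = 0 and f̃(t,x) = 0 whenever ‖x‖ ≥ R and t ∈ [0,T]. Assume f̃(0,x) = 0 for all x and that f̃ solves the linearized transport equation ∂_t f̃(t,x) + div_x(a(x) f̃(t,x)) + div_x(ã(x) f(t,x)) = 0 for all (t,x). Let g : [0,T] × ℝ^d → ℝ be twice continuously differentiable with ∂_t g(t,x) + ⟨a(x), ∇_x g(t,x)⟩ = 0 for all (t,x), and g(T,x)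 = ν(x). Then ∫_{ℝ^d} ν(x) f̃(T,x) dx = ∫₀^T ∫_{ℝ^d} ⟨∇_x g(t,x), ã(x)⟩ f(t,x) dx dt. -/
open MeasureTheory Set
open scoped RealInnerProductSpace BigOperators

noncomputable section

/-- The divergence of a vector field on `ℝ^d`. -/
def vdiv {d : ℕ} (F : Euc d → Euc d) (x : Euc d) : ℝ :=
  ∑ i : Fin d, fderiv ℝ F x (EuclideanSpace.single i 1) i

lemma euc_sum_single {d : ℕ} (x : Euc d) :
    ∑ i : Fin d, x i • EuclideanSpace.single i (1:ℝ) = x := by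
  have := (EuclideanSpace.basisFun (Fin d) ℝ).sum_repr x
  simpa [EuclideanSpace.basisFun_repr, EuclideanSpace.basisFun_apply] using this

lemma inner_gradient_eq {d : ℕ} (c : Euc d → ℝ) (x y : Euc d) :
    ⟪gradient c x, y⟫ = fderiv ℝ c x y := by
  simp [gradient, InnerProductSpace.toDual_symm_apply]

lemma vdiv_smul {d : ℕ} (c : Euc d → ℝ) (W : Euc d → Euc d) (x : Euc d)
    (hc : DifferentiableAt ℝ c x) (hW : DifferentiableAt ℝ W x) :
    vdiv (fun y => c y • W y) x = ⟪gradient c x, W x⟫ + c x * vdiv W x := by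
  have hd : fderiv ℝ (fun y => c y • W y) x
      = c x • fderiv ℝ W x + (fderiv ℝ c x).smulRight (W x) := fderiv_smul hc hW
  have h1 : ⟪gradient c x, W x⟫ = ∑ i : Fin d, fderiv ℝ c x (EuclideanSpace.single i 1) * W x i := by
    rw [inner_gradient_eq]
    conv_lhs => rw [← euc_sum_single (W x)]
    rw [map_sum]
    simp [mul_comm]
  rw [vdiv, hd, h1, vdiv, Finset.mul_sum, ← Finset.sum_add_distrib]
  congr 1; ext i
  simp [ContinuousLinearMap.smulRight_apply, mul_comm]
  ring

lemma abs_coord_le_norm {d : ℕ} (z : Euc d) (i : Fin d) : |z i| ≤ ‖z‖ := by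
  have h : z i = ⟪EuclideanSpace.single i (1:ℝ), z⟫ := by
    simp [EuclideanSpace.inner_single_left]
  rw [h]
  calc |⟪EuclideanSpace.single i (1:ℝ), z⟫| ≤ ‖EuclideanSpace.single i (1:ℝ)‖ * ‖z‖ :=
        abs_real_inner_le_norm _ _
    _ = ‖z‖ := by simp [EuclideanSpace.norm_single]

lemma vdiv_continuous {d : ℕ} {V : Euc d → Euc d} (hV : ContDiff ℝ 1 V) :
    Continuous (vdiv V) := by
  have hc : Continuous (fderiv ℝ V) := (hV.continuous_fderiv one_ne_zero)
  exact continuous_finset_sum _ fun i _ => by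
    exact ((EuclideanSpace.proj i).continuous.comp
      ((ContinuousLinearMap.apply ℝ (Euc d) (EuclideanSpace.single i 1)).continuous.comp hc))

lemma vdiv_support {d : ℕ} {V : Euc d → Euc d} {x : Euc d} (h : x ∉ tsupport V) :
    vdiv V x = 0 := by
  simp [vdiv, fderiv_of_notMem_tsupport _ h]

lemma hasCompactSupport_vdiv {d : ℕ} {V : Euc d → Euc d} (h : HasCompactSupport V) :
    HasCompactSupport (vdiv V) :=
  h.mono' fun x hx => by
    by_contra hmem
    exact hx (vdiv_support hmem)

lemma integral_vdiv_eq_zero {n : ℕ} (V : Euc (n+1) → Euc (n+1)) (hV : ContDiff ℝ 1 V)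
    (hsupp : HasCompactSupport V) : ∫ x, vdiv V x = 0 := by
  classical
  set eL := EuclideanSpace.equiv (Fin (n+1)) ℝ with heL
  obtain ⟨r, hr⟩ : ∃ r, tsupport V ⊆ Metric.closedBall 0 r :=
    hsupp.isBounded.subset_closedBall 0
  set M : ℝ := max r 0 + 1 with hM
  have hMpos : (0:ℝ) < M := by positivity
  have hnot : ∀ z : Euc (n+1), M ≤ ‖z‖ → z ∉ tsupport V := by
    intro z hz hmem
    have := hr hmem
    rw [Metric.mem_closedBall, dist_zero_right] at this
    have : M ≤ r := le_trans hz this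
    have : r < M := by
      rw [hM]; exact lt_of_le_of_lt (le_max_left r 0) (by linarith [le_max_left r 0])
    linarith
  have hVz : ∀ z : Euc (n+1), M ≤ ‖z‖ → V z = 0 := fun z hz =>
    image_eq_zero_of_notMem_tsupport (hnot z hz)
  have hdivz : ∀ z : Euc (n+1), M ≤ ‖z‖ → vdiv V z = 0 := fun z hz =>
    vdiv_support (hnot z hz)
  set a : Fin (n+1) → ℝ := fun _ => -M
  set b : Fin (n+1) → ℝ := fun _ => M
  have hle : a ≤ b := fun i => by simp [a, b]; linarith
  set F : (Fin (n+1) → ℝ) → (Fin (n+1) → ℝ) := fun y => eL (V (eL.symm y)) with hF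
  set F' : (Fin (n+1) → ℝ) → (Fin (n+1) → ℝ) →L[ℝ] (Fin (n+1) → ℝ) := fun y =>
    (eL : Euc (n+1) →L[ℝ] (Fin (n+1) → ℝ)).comp
      ((fderiv ℝ V (eL.symm y)).comp
        (eL.symm : (Fin (n+1) → ℝ) →L[ℝ] Euc (n+1))) with hF'
  have hdiveq : ∀ y : Fin (n+1) → ℝ,
      (∑ i, F' y (Pi.single i 1) i) = vdiv V (eL.symm y) := by
    intro y
    unfold vdiv
    refine Finset.sum_congr rfl fun i _ => ?_
    congr 1
  have key := integral_divergence_of_hasFDerivAt_off_countable a b hle F F' ∅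
    countable_empty
    (Continuous.continuousOn (by
      exact eL.continuous.comp ((hV.continuous).comp eL.symm.continuous)))
    (fun y _ => by
      have h1 : HasFDerivAt V (fderiv ℝ V (eL.symm y)) (eL.symm y) :=
        (hV.differentiable one_ne_zero (eL.symm y)).hasFDerivAt
      exact (eL.hasFDerivAt.comp _ (h1.comp _ eL.symm.hasFDerivAt)))
    (by
      have : Continuous fun y : Fin (n+1) → ℝ => vdiv V (eL.symm y) :=
        (vdiv_continuous hV).comp eL.symm.continuous
      refine ((this.integrable_of_hasCompactSupport ?_).integrableOn).congr_fun ?_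
        measurableSet_Icc
      · exact ((hasCompactSupport_vdiv hsupp).comp_homeomorph eL.symm.toHomeomorph)
      · intro y _; exact (hdiveq y).symm)
  -- boundary terms vanish
  have hbd : ∀ (i : Fin (n+1)) (c : ℝ), |c| = M → ∀ x : Fin n → ℝ,
      F (i.insertNth c x) i = 0 := by
    intro i c hc x
    have hcoord : (eL.symm (i.insertNth c x)) i = c :=
      Fin.insertNth_apply_same (α := fun _ => ℝ) i c x
    have : M ≤ ‖eL.symm (i.insertNth c x)‖ := by
      calc M = |c| := hc.symm
        _ = |(eL.symm (i.insertNth c x)) i| := by rw [hcoord]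
        _ ≤ _ := abs_coord_le_norm _ i
    simp [hF, hVz _ this]
  rw [Finset.sum_eq_zero (fun i _ => by
    rw [setIntegral_congr_fun measurableSet_Icc (fun x _ => hbd i M (by simp [abs_of_pos hMpos]) x),
      setIntegral_congr_fun measurableSet_Icc (fun x _ => hbd i (-M) (by simp [abs_of_pos hMpos]) x),
      sub_self])] at key
  have lhs : (∫ y in Icc a b, ∑ i, F' y (Pi.single i 1) i) = ∫ x, vdiv V x := by
    rw [setIntegral_congr_fun measurableSet_Icc (fun y _ => hdiveq y)]
    rw [setIntegral_eq_integral_of_forall_compl_eq_zero (fun y hy => ?_)]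
    · exact (PiLp.volume_preserving_toLp (Fin (n+1))).integral_comp
          (MeasurableEquiv.toLp 2 (Fin (n+1) → ℝ)).measurableEmbedding _
    · -- y outside the box
      simp only [Set.mem_Icc, not_and_or, not_le] at hy
      apply hdivz
      rcases hy with hy | hy
      · rw [Pi.le_def, not_forall] at hy
        obtain ⟨i, hi⟩ := hy
        simp only [a, not_le] at hi
        calc M ≤ |(eL.symm y) i| := by
              have h0 : (eL.symm y) i = y i := rfl
              rw [h0]
              have : M ≤ -(y i) := by linarith
              exact le_trans this (neg_le_abs _)
          _ ≤ ‖eL.symm y‖ := abs_coord_le_norm _ i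
      · rw [Pi.le_def, not_forall] at hy
        obtain ⟨i, hi⟩ := hy
        simp only [b, not_le] at hi
        calc M ≤ |(eL.symm y) i| := by
              have h0 : (eL.symm y) i = y i := rfl
              rw [h0]
              exact le_trans (le_of_lt hi) (le_abs_self _)
          _ ≤ ‖eL.symm y‖ := abs_coord_le_norm _ i
  rw [← lhs, key]


lemma continuous_gradient {d : ℕ} {c : Euc d → ℝ} (hc : ContDiff ℝ 1 c) :
    Continuous (fun x => gradient c x) := by
  simp only [gradient]
  exact (InnerProductSpace.toDual ℝ (Euc d)).symm.continuous.comp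
    (hc.continuous_fderiv one_ne_zero)

lemma integral_mul_vdiv {n : ℕ} (c : Euc (n+1) → ℝ) (W : Euc (n+1) → Euc (n+1))
    (hc : ContDiff ℝ 1 c) (hW : ContDiff ℝ 1 W) (hWs : HasCompactSupport W) :
    ∫ x, c x * vdiv W x = - ∫ x, ⟪gradient c x, W x⟫ := by
  have hcWs : HasCompactSupport (fun y => c y • W y) :=
    hWs.mono' fun x hx => by
      by_contra hmem
      apply hx
      simp [image_eq_zero_of_notMem_tsupport hmem]
  have h0 := integral_vdiv_eq_zero (fun y => c y • W y)
    (hc.smul hW) hcWs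
  have heq : ∀ x, vdiv (fun y => c y • W y) x = ⟪gradient c x, W x⟫ + c x * vdiv W x :=
    fun x => vdiv_smul c W x (hc.differentiable one_ne_zero x)
      (hW.differentiable one_ne_zero x)
  rw [integral_congr_ae (Filter.Eventually.of_forall heq)] at h0
  have hA : Integrable (fun x => ⟪gradient c x, W x⟫) := by
    apply Continuous.integrable_of_hasCompactSupport
    · exact (continuous_gradient hc).inner hW.continuous
    · exact hWs.mono' fun x hx => by
        by_contra hmem
        apply hx
        simp [image_eq_zero_of_notMem_tsupport hmem]
  have hB : Integrable (fun x => c x * vdiv W x) := by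
    apply Continuous.integrable_of_hasCompactSupport
    · exact hc.continuous.mul (vdiv_continuous hW)
    · exact (hasCompactSupport_vdiv hWs).mul_left
  rw [integral_add hA hB] at h0
  linarith

section slices
variable {d : ℕ} {u : ℝ → Euc d → ℝ}

lemma slice_x {k : ℕ∞} (hu : ContDiff ℝ k (fun p : ℝ × Euc d => u p.1 p.2)) (t : ℝ) :
    ContDiff ℝ k (u t) :=
  hu.comp (contDiff_const.prodMk contDiff_id)

lemma hasDerivAt_slice (hu : ContDiff ℝ 1 (fun p : ℝ × Euc d => u p.1 p.2)) (t : ℝ) (x : Euc d) :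
    HasDerivAt (fun s => u s x)
      (fderiv ℝ (fun p : ℝ × Euc d => u p.1 p.2) (t, x) (1, 0)) t := by
  have h1 : HasFDerivAt (fun p : ℝ × Euc d => u p.1 p.2)
      (fderiv ℝ (fun p : ℝ × Euc d => u p.1 p.2) (t, x)) (t, x) :=
    (hu.differentiable one_ne_zero _).hasFDerivAt
  have h2 : HasDerivAt (fun s : ℝ => (s, x)) ((1 : ℝ), (0 : Euc d)) t :=
    (hasDerivAt_id t).prodMk (hasDerivAt_const t x)
  exact h1.comp_hasDerivAt t h2

lemma fderiv_slice (hu : ContDiff ℝ 1 (fun p : ℝ × Euc d => u p.1 p.2)) (t : ℝ) (x : Euc d)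
    (v : Euc d) :
    fderiv ℝ (u t) x v = fderiv ℝ (fun p : ℝ × Euc d => u p.1 p.2) (t, x) (0, v) := by
  have h1 : HasFDerivAt (fun p : ℝ × Euc d => u p.1 p.2)
      (fderiv ℝ (fun p : ℝ × Euc d => u p.1 p.2) (t, x)) (t, x) :=
    (hu.differentiable one_ne_zero _).hasFDerivAt
  have h2 : HasFDerivAt (u t)
      ((fderiv ℝ (fun p : ℝ × Euc d => u p.1 p.2) (t, x)).comp
        (ContinuousLinearMap.inr ℝ ℝ (Euc d))) x :=
    h1.comp x (hasFDerivAt_prodMk_right t x)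
  rw [h2.fderiv]
  rfl

lemma inner_gradient_slice (hu : ContDiff ℝ 1 (fun p : ℝ × Euc d => u p.1 p.2)) (t : ℝ)
    (x v : Euc d) :
    ⟪gradient (u t) x, v⟫ = fderiv ℝ (fun p : ℝ × Euc d => u p.1 p.2) (t, x) (0, v) := by
  rw [inner_gradient_eq, fderiv_slice hu]

end slices

/-- (Duality content of Lemma 2.2.) For the linear transport equation,
the derivative of the objective `∫ ν f(T)` in the direction of a velocity perturbation
`a'`, represented by the solution `f'` of the linearized equation, equals
`∫₀ᵀ ∫ ⟪∇g, a'⟫ f dx dt` involving the adjoint state `g`. -/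
theorem pde_first_variation_duality
    (d : ℕ) (hd : 1 ≤ d) (T : ℝ) (hT : 0 < T)
    (a a' : Euc d → Euc d) (ha : ContDiff ℝ 1 a) (ha' : ContDiff ℝ 1 a')
    (ν : Euc d → ℝ) (hν : ContDiff ℝ 1 ν)
    (f f' : ℝ → Euc d → ℝ)
    (hf : ContDiff ℝ 1 (fun p : ℝ × Euc d => f p.1 p.2))
    (hf' : ContDiff ℝ 1 (fun p : ℝ × Euc d => f' p.1 p.2))
    (hsupp : ∃ R > 0, ∀ t ∈ Icc (0 : ℝ) T, ∀ x : Euc d, R ≤ ‖x‖ →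
      f t x = 0 ∧ f' t x = 0)
    (hf'0 : ∀ x : Euc d, f' 0 x = 0)
    (hf'PDE : ∀ t ∈ Icc (0 : ℝ) T, ∀ x : Euc d,
      deriv (fun s => f' s x) t
        + vdiv (fun y => f' t y • a y) x
        + vdiv (fun y => f t y • a' y) x = 0)
    (g : ℝ → Euc d → ℝ)
    (hg : ContDiff ℝ 2 (fun p : ℝ × Euc d => g p.1 p.2))
    (hgPDE : ∀ t ∈ Icc (0 : ℝ) T, ∀ x : Euc d,
      deriv (fun s => g s x) t + ⟪a x, gradient (g t) x⟫ = 0)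
    (hgT : ∀ x : Euc d, g T x = ν x) :
    (∫ x, ν x * f' T x)
      = ∫ t in (0 : ℝ)..T, ∫ x, ⟪gradient (g t) x, a' x⟫ * f t x := by
  obtain ⟨n, rfl⟩ : ∃ n, d = n + 1 := ⟨d - 1, (Nat.succ_pred_eq_of_pos hd).symm⟩
  obtain ⟨R, hRpos, hR⟩ := hsupp
  have hg1 : ContDiff ℝ 1 (fun p : ℝ × Euc (n+1) => g p.1 p.2) := hg.of_le one_le_two
  -- compact supports of slices
  have hsupp_ball : ∀ (u : ℝ → Euc (n+1) → ℝ),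
      (∀ t ∈ Icc (0:ℝ) T, ∀ x : Euc (n+1), R ≤ ‖x‖ → u t x = 0) →
      ∀ t ∈ Icc (0:ℝ) T, HasCompactSupport (u t) := by
    intro u hu t ht
    refine HasCompactSupport.intro (isCompact_closedBall 0 R) fun x hx => ?_
    refine hu t ht x ?_
    rw [Metric.mem_closedBall, dist_zero_right, not_le] at hx
    exact hx.le
  have hsf : ∀ t ∈ Icc (0:ℝ) T, HasCompactSupport (f t) :=
    hsupp_ball f (fun t ht x hx => (hR t ht x hx).1)
  have hsf' : ∀ t ∈ Icc (0:ℝ) T, HasCompactSupport (f' t) :=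
    hsupp_ball f' (fun t ht x hx => (hR t ht x hx).2)
  -- joint derivative-in-time functions
  set DG : ℝ × Euc (n+1) → ℝ :=
    fun p => fderiv ℝ (fun q : ℝ × Euc (n+1) => g q.1 q.2) p (1, 0) with hDG
  set DF : ℝ × Euc (n+1) → ℝ :=
    fun p => fderiv ℝ (fun q : ℝ × Euc (n+1) => f' q.1 q.2) p (1, 0) with hDF
  have hDGc : Continuous DG :=
    (hg1.continuous_fderiv one_ne_zero).clm_apply continuous_const
  have hDFc : Continuous DF :=
    (hf'.continuous_fderiv one_ne_zero).clm_apply continuous_const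
  have hDGeq : ∀ t x, DG (t, x) = deriv (fun s => g s x) t :=
    fun t x => ((hasDerivAt_slice hg1 t x).deriv).symm
  have hDFeq : ∀ t x, DF (t, x) = deriv (fun s => f' s x) t :=
    fun t x => ((hasDerivAt_slice hf' t x).deriv).symm
  -- DF vanishes for large x, t interior
  have hDF0 : ∀ t ∈ Ioo (0:ℝ) T, ∀ x : Euc (n+1), R ≤ ‖x‖ → DF (t, x) = 0 := by
    intro t ht x hx
    rw [hDFeq]
    have hev : (fun s => f' s x) =ᶠ[nhds t] (fun _ => (0:ℝ)) := by
      filter_upwards [isOpen_Ioo.mem_nhds ht] with s hs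
      exact (hR s (Ioo_subset_Icc_self hs) x hx).2
    rw [hev.deriv_eq]
    exact deriv_const t 0
  -- the function h
  set h : ℝ → ℝ := fun t => ∫ x, g t x * f' t x with hh
  -- joint integrand for the RHS
  set Φ : ℝ × Euc (n+1) → ℝ :=
    fun p => fderiv ℝ (fun q : ℝ × Euc (n+1) => g q.1 q.2) p ((0:ℝ), a' p.2) * f p.1 p.2
    with hΦ
  have hΦc : Continuous Φ := by
    apply Continuous.mul
    · exact (hg1.continuous_fderiv one_ne_zero).clm_apply
        (continuous_const.prodMk (ha'.continuous.comp continuous_snd))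
    · exact hf.continuous
  have hΦeq : ∀ t x, ⟪gradient (g t) x, a' x⟫ * f t x = Φ (t, x) := by
    intro t x
    rw [hΦ]
    rw [inner_gradient_slice hg1]
  set φ : ℝ → ℝ := fun t => ∫ x, ⟪gradient (g t) x, a' x⟫ * f t x with hφ
  -- step: h 0 = 0
  have h0 : h 0 = 0 := by simp [hh, hf'0]
  -- step: h T
  have hTeq : h T = ∫ x, ν x * f' T x := by
    rw [hh]
    exact integral_congr_ae (Filter.Eventually.of_forall fun x => by simp [hgT])
  -- step: derivative of h
  have hsmul_left : ∀ (c : Euc (n+1) → ℝ) (W : Euc (n+1) → Euc (n+1)),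
      HasCompactSupport c → HasCompactSupport (fun y => c y • W y) := by
    intro c W hc
    refine hc.mono' fun x hx => ?_
    by_contra hm
    apply hx
    simp [image_eq_zero_of_notMem_tsupport hm]
  have hderiv : ∀ t ∈ Ioo (0:ℝ) T, HasDerivAt h (φ t) t := by
    intro t₀ ht₀
    have ht₀I : t₀ ∈ Icc (0:ℝ) T := Ioo_subset_Icc_self ht₀
    set ε : ℝ := min t₀ (T - t₀) / 2 with hε
    have hεpos : 0 < ε := by
      rw [hε]
      have h1 := ht₀.1
      have h2 := ht₀.2
      have : 0 < min t₀ (T - t₀) := lt_min h1 (by linarith)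
      linarith
    have hball : Metric.ball t₀ ε ⊆ Ioo 0 T := by
      intro s hs
      rw [Metric.mem_ball, Real.dist_eq, abs_lt] at hs
      have h1 : ε ≤ t₀ / 2 := by
        rw [hε]
        have : min t₀ (T - t₀) ≤ t₀ := min_le_left _ _
        linarith
      have h2 : ε ≤ (T - t₀) / 2 := by
        rw [hε]
        have : min t₀ (T - t₀) ≤ T - t₀ := min_le_right _ _
        linarith
      constructor <;> [linarith [ht₀.1]; linarith [ht₀.2]]
    set Fd : ℝ → Euc (n+1) → ℝ := fun t x => DG (t, x) * f' t x + g t x * DF (t, x)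
      with hFddef
    obtain ⟨C, hC⟩ := ((isCompact_Icc (a := t₀ - ε) (b := t₀ + ε)).prod
      (isCompact_closedBall (0 : Euc (n+1)) R)).exists_bound_of_continuousOn
      (((hDGc.mul hf'.continuous).add (hg1.continuous.mul hDFc)).continuousOn)
    have key := hasDerivAt_integral_of_dominated_loc_of_deriv_le (μ := volume)
      (F := fun t x => g t x * f' t x) (F' := Fd)
      (x₀ := t₀)
      (bound := (Metric.closedBall (0 : Euc (n+1)) R).indicator fun _ => C)
      (Metric.ball_mem_nhds t₀ hεpos)
      (Filter.Eventually.of_forall fun t =>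
        ((slice_x hg1 t).continuous.mul (slice_x hf' t).continuous).aestronglyMeasurable)
      (((slice_x hg1 t₀).continuous.mul
        (slice_x hf' t₀).continuous).integrable_of_hasCompactSupport
          ((hsf' t₀ ht₀I).mul_left))
      (((hDGc.comp (Continuous.prodMk_right t₀)).mul (slice_x hf' t₀).continuous).add
        ((slice_x hg1 t₀).continuous.mul
          (hDFc.comp (Continuous.prodMk_right t₀)))).aestronglyMeasurable
      (Filter.Eventually.of_forall fun x => by
        intro t ht
        have htI : t ∈ Ioo (0:ℝ) T := hball ht
        by_cases hx : x ∈ Metric.closedBall (0 : Euc (n+1)) R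
        · rw [Set.indicator_of_mem hx]
          refine hC (t, x) (Set.mk_mem_prod ?_ hx)
          rw [Metric.mem_ball, Real.dist_eq, abs_lt] at ht
          constructor <;> [linarith [ht.1]; linarith [ht.2]]
        · rw [Set.indicator_of_notMem hx]
          have hxR : R ≤ ‖x‖ := by
            rw [Metric.mem_closedBall, dist_zero_right, not_le] at hx
            exact hx.le
          have e1 : f' t x = 0 := (hR t (Ioo_subset_Icc_self htI) x hxR).2
          have e2 : DF (t, x) = 0 := hDF0 t htI x hxR
          simp [hFddef, e1, e2])
      (by
        rw [integrable_indicator_iff measurableSet_closedBall]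
        exact integrableOn_const measure_closedBall_lt_top.ne)
      (Filter.Eventually.of_forall fun x => by
        intro t _
        exact (hasDerivAt_slice hg1 t x).mul (hasDerivAt_slice hf' t x))
    obtain ⟨-, hmain⟩ := key
    -- now identify the value of the derivative
    set W1 : Euc (n+1) → Euc (n+1) := fun y => f' t₀ y • a y with hW1def
    set W2 : Euc (n+1) → Euc (n+1) := fun y => f t₀ y • a' y with hW2def
    have hW1 : ContDiff ℝ 1 W1 := (slice_x hf' t₀).smul ha
    have hW2 : ContDiff ℝ 1 W2 := (slice_x hf t₀).smul ha'
    have hW1s : HasCompactSupport W1 := hsmul_left _ _ (hsf' t₀ ht₀I)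
    have hW2s : HasCompactSupport W2 := hsmul_left _ _ (hsf t₀ ht₀I)
    have hgW1 : ContDiff ℝ 1 (fun y => g t₀ y • W1 y) := (slice_x hg1 t₀).smul hW1
    have hgW1s : HasCompactSupport (fun y => g t₀ y • W1 y) := by
      refine hW1s.mono' fun x hx => ?_
      by_contra hm
      apply hx
      simp [image_eq_zero_of_notMem_tsupport hm]
    have hpt : ∀ x, Fd t₀ x = -vdiv (fun y => g t₀ y • W1 y) x - g t₀ x * vdiv W2 x := by
      intro x
      have e1 : DG (t₀, x) = -⟪a x, gradient (g t₀) x⟫ := by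
        have := hgPDE t₀ ht₀I x
        rw [hDGeq]
        linarith
      have e2 : DF (t₀, x) = -(vdiv W1 x + vdiv W2 x) := by
        have := hf'PDE t₀ ht₀I x
        rw [hDFeq]
        rw [hW1def, hW2def]
        linarith
      have e3 : vdiv (fun y => g t₀ y • W1 y) x
          = ⟪gradient (g t₀) x, W1 x⟫ + g t₀ x * vdiv W1 x :=
        vdiv_smul _ _ x ((slice_x hg1 t₀).differentiable one_ne_zero x)
          (hW1.differentiable one_ne_zero x)
      have e4 : ⟪gradient (g t₀) x, W1 x⟫ = ⟪a x, gradient (g t₀) x⟫ * f' t₀ x := by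
        rw [hW1def]
        simp only [real_inner_smul_right]
        rw [real_inner_comm]
        ring
      show DG (t₀, x) * f' t₀ x + g t₀ x * DF (t₀, x) = _
      rw [e1, e2, e3, e4]
      ring
    have hI2 : Integrable (vdiv (fun y => g t₀ y • W1 y)) :=
      (vdiv_continuous hgW1).integrable_of_hasCompactSupport (hasCompactSupport_vdiv hgW1s)
    have hI3 : Integrable (fun x => g t₀ x * vdiv W2 x) :=
      ((slice_x hg1 t₀).continuous.mul
        (vdiv_continuous hW2)).integrable_of_hasCompactSupport
        ((hasCompactSupport_vdiv hW2s).mul_left)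
    have hval : (∫ x, Fd t₀ x) = φ t₀ := by
      rw [integral_congr_ae (Filter.Eventually.of_forall hpt)]
      have hI2' : Integrable (fun x => -vdiv (fun y => g t₀ y • W1 y) x) := hI2.neg
      rw [integral_sub hI2' hI3, integral_neg]
      rw [integral_vdiv_eq_zero _ hgW1 hgW1s]
      rw [integral_mul_vdiv _ _ (slice_x hg1 t₀) hW2 hW2s]
      rw [neg_zero, zero_sub, neg_neg]
      refine integral_congr_ae (Filter.Eventually.of_forall fun x => ?_)
      show ⟪gradient (g t₀) x, W2 x⟫ = ⟪gradient (g t₀) x, a' x⟫ * f t₀ x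
      rw [hW2def]
      simp only [real_inner_smul_right]
      ring
    rw [hval] at hmain
    exact hmain
  -- step: continuity of h on [0, T]
  have hcont : ContinuousOn h (Icc 0 T) := by
    obtain ⟨C, hC⟩ := (isCompact_Icc.prod
      (isCompact_closedBall (0 : Euc (n+1)) R)).exists_bound_of_continuousOn
      ((hg1.continuous.mul hf'.continuous).continuousOn)
    apply continuousOn_of_dominated
      (bound := (Metric.closedBall (0 : Euc (n+1)) R).indicator fun _ => C)
    · intro t _
      exact ((slice_x hg1 t).continuous.mul (slice_x hf' t).continuous).aestronglyMeasurable
    · intro t ht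
      refine Filter.Eventually.of_forall fun x => ?_
      by_cases hx : x ∈ Metric.closedBall (0 : Euc (n+1)) R
      · rw [Set.indicator_of_mem hx]
        exact hC (t, x) (Set.mk_mem_prod ht hx)
      · rw [Set.indicator_of_notMem hx]
        have hxR : R ≤ ‖x‖ := by
          rw [Metric.mem_closedBall, dist_zero_right, not_le] at hx
          exact hx.le
        simp [(hR t ht x hxR).2]
    · rw [integrable_indicator_iff measurableSet_closedBall]
      exact integrableOn_const measure_closedBall_lt_top.ne
    · refine Filter.Eventually.of_forall fun x => ?_
      exact ((hg1.continuous.comp (continuous_id.prodMk continuous_const)).mul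
        (hf'.continuous.comp (continuous_id.prodMk continuous_const))).continuousOn
  -- step: interval integrability of φ
  have hφΦ : ∀ t, φ t = ∫ x, Φ (t, x) := fun t =>
    integral_congr_ae (Filter.Eventually.of_forall fun x => hΦeq t x)
  have hII : IntervalIntegrable φ volume 0 T := by
    apply ContinuousOn.intervalIntegrable
    rw [Set.uIcc_of_le hT.le]
    have hΦcont : ContinuousOn (fun t => ∫ x, Φ (t, x)) (Icc 0 T) := by
      obtain ⟨C, hC⟩ := (isCompact_Icc.prod
        (isCompact_closedBall (0 : Euc (n+1)) R)).exists_bound_of_continuousOn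
        hΦc.continuousOn
      apply continuousOn_of_dominated
        (bound := (Metric.closedBall (0 : Euc (n+1)) R).indicator fun _ => C)
      · intro t _
        exact (hΦc.comp (continuous_const.prodMk continuous_id)).aestronglyMeasurable
      · intro t ht
        refine Filter.Eventually.of_forall fun x => ?_
        by_cases hx : x ∈ Metric.closedBall (0 : Euc (n+1)) R
        · rw [Set.indicator_of_mem hx]
          exact hC (t, x) (Set.mk_mem_prod ht hx)
        · rw [Set.indicator_of_notMem hx]
          have hxR : R ≤ ‖x‖ := by
            rw [Metric.mem_closedBall, dist_zero_right, not_le] at hx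
            exact hx.le
          simp [hΦ, (hR t ht x hxR).1]
      · rw [integrable_indicator_iff measurableSet_closedBall]
        exact integrableOn_const measure_closedBall_lt_top.ne
      · refine Filter.Eventually.of_forall fun x => ?_
        exact (hΦc.comp (continuous_id.prodMk continuous_const)).continuousOn
    exact hΦcont.congr fun t _ => hφΦ t
  have key := intervalIntegral.integral_eq_sub_of_hasDeriv_right_of_le hT.le hcont
    (fun t ht => (hderiv t ht).hasDerivWithinAt) hII
  rw [key, hTeq, h0, sub_zero]
end
end

section
/- Let d ≥ 1, T > 0, and N ≥ 1. Let w, w̃ : ℝ^d → ℝ^d be continuously differentiable and ν : ℝ^d → ℝ continuously differentiable. Let X_1, …, X_N : [0,T] → ℝ^d be differentiable with X_i'(t) = (1/N) Σ_{j≠i} w(X_i(t) − X_j(t)) for all t ∈ [0,T]. Let Z_1, …, Z_N : [0,T] → ℝ^d be differentiable with Z_i(0) = 0 and Z_i'(t) = (1/N) Σ_{j≠i} [ Dw(X_i(t) − X_j(t))(Z_i(t) − Z_j(t)) + w̃(X_i(t) − X_j(t)) ] for all t. Let Y_1, …, Y_N : [0,T] → ℝ^d be differentiable with Y_i'(t)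 + (1/N) Σ_{j≠i} (Dw(X_i(t) − X_j(t)))ᵀ Y_i(t) − (1/N) Σ_{j≠i} (Dw(X_j(t) − X_i(t)))ᵀ Y_j(t) = 0 and Y_i(T) = ∇ν(X_i(T)). Then (1/N) Σ_{i=1}^N ⟨∇ν(X_i(T)), Z_i(T)⟩ = (1/N²) Σ_{i=1}^N Σ_{j≠i} ∫₀^T ⟨Y_i(t), w̃(X_i(t) − X_j(t))⟩ dt. -/
open MeasureTheory Set Finset
open scoped RealInnerProductSpace BigOperators

noncomputable section

private lemma swap_sum' {N : ℕ} (f : Fin N → Fin N → ℝ) :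
    ∑ i : Fin N, ∑ j ∈ univ.erase i, f i j
      = ∑ i : Fin N, ∑ j ∈ univ.erase i, f j i :=
  Finset.sum_comm' (by simp [ne_comm, eq_comm])

/-- (Duality content of Lemma 3.6.) For the interacting particle system
and objective `(1/N)Σ ν(X_i(T))`, the first variation in the direction of a kernel
perturbation `w'`, represented by the solutions `Z_i` of the linearized system, equals
`(1/N²) Σ_i Σ_{j≠i} ∫₀ᵀ ⟪Y_i, w'(X_i − X_j)⟫ dt` involving the adjoint variables `Y_i`. -/
theorem particle_kernel_first_variation_duality
    (d : ℕ) (hd : 1 ≤ d) (T : ℝ) (hT : 0 < T) (N : ℕ) (hN : 1 ≤ N)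
    (w w' : Euc d → Euc d) (hw : ContDiff ℝ 1 w) (hw' : ContDiff ℝ 1 w')
    (ν : Euc d → ℝ) (hν : ContDiff ℝ 1 ν)
    (X : Fin N → ℝ → Euc d)
    (hX : ∀ i, ∀ t ∈ Icc (0 : ℝ) T,
      HasDerivAt (X i)
        ((N : ℝ)⁻¹ • ∑ j ∈ univ.erase i, w (X i t - X j t)) t)
    (Z : Fin N → ℝ → Euc d)
    (hZ0 : ∀ i, Z i 0 = 0)
    (hZ : ∀ i, ∀ t ∈ Icc (0 : ℝ) T,
      HasDerivAt (Z i)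
        ((N : ℝ)⁻¹ • ∑ j ∈ univ.erase i,
          (fderiv ℝ w (X i t - X j t) (Z i t - Z j t) + w' (X i t - X j t))) t)
    (Y : Fin N → ℝ → Euc d)
    (hY : ∀ i, ∀ t ∈ Icc (0 : ℝ) T,
      HasDerivAt (Y i)
        ((N : ℝ)⁻¹ • ∑ j ∈ univ.erase i,
            ContinuousLinearMap.adjoint (fderiv ℝ w (X j t - X i t)) (Y j t)
          - (N : ℝ)⁻¹ • ∑ j ∈ univ.erase i,
            ContinuousLinearMap.adjoint (fderiv ℝ w (X i t - X j t)) (Y i t)) t)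
    (hYT : ∀ i, Y i T = gradient ν (X i T)) :
    (N : ℝ)⁻¹ * ∑ i : Fin N, ⟪gradient ν (X i T), Z i T⟫
      = ((N : ℝ) ^ 2)⁻¹ * ∑ i : Fin N, ∑ j ∈ univ.erase i,
          ∫ t in (0 : ℝ)..T, ⟪Y i t, w' (X i t - X j t)⟫ := by
  set c : ℝ := (N : ℝ)⁻¹ with hc
  set g : ℝ → ℝ := fun t => c * ∑ i : Fin N, ∑ j ∈ univ.erase i,
      ⟪Y i t, w' (X i t - X j t)⟫ with hg
  -- per-term algebraic identity
  have hterm : ∀ t (i : Fin N),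
      (⟪Y i t, c • ∑ j ∈ univ.erase i,
          (fderiv ℝ w (X i t - X j t) (Z i t - Z j t) + w' (X i t - X j t))⟫
        + ⟪(c • ∑ j ∈ univ.erase i,
            ContinuousLinearMap.adjoint (fderiv ℝ w (X j t - X i t)) (Y j t)
          - c • ∑ j ∈ univ.erase i,
            ContinuousLinearMap.adjoint (fderiv ℝ w (X i t - X j t)) (Y i t)), Z i t⟫)
      = c * ∑ j ∈ univ.erase i, ⟪Y i t, w' (X i t - X j t)⟫
        + (c * ∑ j ∈ univ.erase i, ⟪Y j t, fderiv ℝ w (X j t - X i t) (Z i t)⟫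
          - c * ∑ j ∈ univ.erase i, ⟪Y i t, fderiv ℝ w (X i t - X j t) (Z j t)⟫) := by
    intro t i
    simp only [real_inner_smul_left, real_inner_smul_right, inner_sub_left,
      inner_add_right, inner_sum, sum_inner, ContinuousLinearMap.adjoint_inner_left,
      map_sub, inner_sub_right, Finset.sum_add_distrib, Finset.sum_sub_distrib]
    ring
  -- derivative of the pairing
  have hderiv : ∀ t ∈ Icc (0 : ℝ) T,
      HasDerivAt (fun t => ∑ i : Fin N, ⟪Y i t, Z i t⟫) (g t) t := by
    intro t ht
    have h := HasDerivAt.fun_sum (fun i (_ : i ∈ (univ : Finset (Fin N))) =>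
      HasDerivAt.inner ℝ (hY i t ht) (hZ i t ht))
    refine h.congr_deriv (Eq.symm ?_)
    rw [Finset.sum_congr rfl (fun i _ => hterm t i)]
    rw [Finset.sum_add_distrib, Finset.sum_sub_distrib, ← Finset.mul_sum,
      ← Finset.mul_sum, ← Finset.mul_sum,
      swap_sum' (fun i j => ⟪Y j t, fderiv ℝ w (X j t - X i t) (Z i t)⟫)]
    simp [hg]
  -- continuity of the data
  have hXc : ∀ i, ContinuousOn (X i) (Icc 0 T) :=
    fun i t ht => ((hX i t ht).continuousAt).continuousWithinAt
  have hYc : ∀ i, ContinuousOn (Y i) (Icc 0 T) :=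
    fun i t ht => ((hY i t ht).continuousAt).continuousWithinAt
  have hint : ∀ i j, IntervalIntegrable
      (fun t => ⟪Y i t, w' (X i t - X j t)⟫) volume 0 T := by
    intro i j
    apply ContinuousOn.intervalIntegrable
    rw [uIcc_of_le hT.le]
    exact (hYc i).inner
      (hw'.continuous.comp_continuousOn ((hXc i).sub (hXc j)))
  have hint2 : ∀ i : Fin N, IntervalIntegrable
      (fun t => ∑ j ∈ univ.erase i, ⟪Y i t, w' (X i t - X j t)⟫) volume 0 T := by
    intro i
    apply ContinuousOn.intervalIntegrable
    rw [uIcc_of_le hT.le]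
    exact continuousOn_finset_sum _ fun j _ =>
      (hYc i).inner (hw'.continuous.comp_continuousOn ((hXc i).sub (hXc j)))
  have hgint : IntervalIntegrable g volume 0 T := by
    apply ContinuousOn.intervalIntegrable
    rw [uIcc_of_le hT.le]
    exact continuousOn_const.mul (continuousOn_finset_sum _ fun i _ =>
      continuousOn_finset_sum _ fun j _ =>
        (hYc i).inner (hw'.continuous.comp_continuousOn ((hXc i).sub (hXc j))))
  -- FTC
  have hFTC : ∫ t in (0 : ℝ)..T, g t
      = (∑ i : Fin N, ⟪Y i T, Z i T⟫) - ∑ i : Fin N, ⟪Y i 0, Z i 0⟫ := by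
    apply intervalIntegral.integral_eq_sub_of_hasDerivAt _ hgint
    intro t ht
    rw [uIcc_of_le hT.le] at ht
    exact hderiv t ht
  have h0 : (∑ i : Fin N, ⟪Y i 0, Z i 0⟫) = 0 := by
    simp [hZ0]
  have hswap : ∫ t in (0 : ℝ)..T, g t
      = c * ∑ i : Fin N, ∑ j ∈ univ.erase i,
          ∫ t in (0 : ℝ)..T, ⟪Y i t, w' (X i t - X j t)⟫ := by
    rw [show (fun t => g t) = fun t => c * ∑ i : Fin N, ∑ j ∈ univ.erase i,
        ⟪Y i t, w' (X i t - X j t)⟫ from rfl]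
    rw [intervalIntegral.integral_const_mul]
    congr 1
    rw [intervalIntegral.integral_finset_sum (fun i _ => hint2 i)]
    exact Finset.sum_congr rfl fun i _ =>
      intervalIntegral.integral_finset_sum (fun j _ => hint i j)
  have hN' : (N : ℝ) ≠ 0 := Nat.cast_ne_zero.mpr (by omega)
  calc c * ∑ i : Fin N, ⟪gradient ν (X i T), Z i T⟫
      = c * ∑ i : Fin N, ⟪Y i T, Z i T⟫ := by
        congr 1; exact Finset.sum_congr rfl fun i _ => by rw [hYT i]
    _ = c * (∫ t in (0 : ℝ)..T, g t) := by rw [hFTC, h0, sub_zero]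
    _ = c * (c * ∑ i : Fin N, ∑ j ∈ univ.erase i,
          ∫ t in (0 : ℝ)..T, ⟪Y i t, w' (X i t - X j t)⟫) := by rw [hswap]
    _ = ((N : ℝ) ^ 2)⁻¹ * ∑ i : Fin N, ∑ j ∈ univ.erase i,
          ∫ t in (0 : ℝ)..T, ⟪Y i t, w' (X i t - X j t)⟫ := by
        rw [← mul_assoc, hc]; congr 1
        field_simp
end
end

section
/- Let d ≥ 1, T > 0, and N ≥ 1. Let w : ℝ^d → ℝ^d be twice continuously differentiable, odd (w(−r) = −w(r) for all r, so w(0) = 0), with sup‖w‖ + sup‖Dw‖ + sup‖D²w‖ ≤ C_bdd, and let ν : ℝ^d → ℝ be continuously differentiable. Let X_1, …, X_N : [0,T] → ℝ^d be differentiable with X_i'(t) = (1/N) Σ_{j≠i} w(X_i(t) − X_j(t)). Let h_N : [0,T] × ℝ^d → ℝ^d be continuously differentiable and solve, for all (t,x), ∂_t h_N(t,x) + ((1/N) Σ_{j=1}^N w(x − X_j(t))) · ∇_x h_N(t,x) − (1/N) Σ_{j=1}^N (Dw(x − X_j(t)))ᵀ h_N(t, X_j(t)) + ((1/N) Σ_{j=1}^N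 (Dw(x − X_j(t)))ᵀ) h_N(t,x) = 0, with terminal condition h_N(T,x) = ∇ν(x), where b·∇_x h_N denotes the directional derivative of each component of h_N in direction b. Let Y_1, …, Y_N : [0,T] → ℝ^d be differentiable with Y_i'(t) + (1/N) Σ_{j≠i} (Dw(X_i(t) − X_j(t)))ᵀ Y_i(t) − (1/N) Σ_{j≠i} (Dw(X_j(t) − X_i(t)))ᵀ Y_j(t) = 0 and Y_i(T) = ∇ν(X_i(T)). Then Y_i(t) = h_N(t, X_i(t)) for every i ∈ {1,…,N} and every t ∈ [0,T]. -/
open MeasureTheory Set Finset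
open scoped RealInnerProductSpace BigOperators

noncomputable section

/-- (Identity (3.16).) For the interacting particle system, the adjoint
particle variables `Y_i` coincide with the classical solution `hN` of the adjoint PDE
associated with the empirical measure, evaluated along the particle trajectories. -/
theorem particle_adjoint_eq_empirical_adjoint_along_trajectories
    (d : ℕ) (hd : 1 ≤ d) (T : ℝ) (hT : 0 < T) (N : ℕ) (hN : 1 ≤ N)
    (w : Euc d → Euc d) (hw : ContDiff ℝ 2 w)
    (hwodd : ∀ r : Euc d, w (-r) = -w r)
    (C_bdd : ℝ)
    (hwbdd : ∀ r : Euc d,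
      ‖w r‖ + ‖fderiv ℝ w r‖ + ‖fderiv ℝ (fderiv ℝ w) r‖ ≤ C_bdd)
    (ν : Euc d → ℝ) (hν : ContDiff ℝ 1 ν)
    (X : Fin N → ℝ → Euc d)
    (hX : ∀ i, ∀ t ∈ Icc (0 : ℝ) T,
      HasDerivAt (X i)
        ((N : ℝ)⁻¹ • ∑ j ∈ univ.erase i, w (X i t - X j t)) t)
    (hN' : ℝ → Euc d → Euc d)
    (hhN : ContDiff ℝ 1 (fun p : ℝ × Euc d => hN' p.1 p.2))
    (hhNPDE : ∀ t ∈ Icc (0 : ℝ) T, ∀ x : Euc d,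
      deriv (fun s => hN' s x) t
        + fderiv ℝ (hN' t) x ((N : ℝ)⁻¹ • ∑ j : Fin N, w (x - X j t))
        - (N : ℝ)⁻¹ • ∑ j : Fin N,
            ContinuousLinearMap.adjoint (fderiv ℝ w (x - X j t)) (hN' t (X j t))
        + (N : ℝ)⁻¹ • ∑ j : Fin N,
            ContinuousLinearMap.adjoint (fderiv ℝ w (x - X j t)) (hN' t x) = 0)
    (hhNT : ∀ x : Euc d, hN' T x = gradient ν x)
    (Y : Fin N → ℝ → Euc d)
    (hY : ∀ i, ∀ t ∈ Icc (0 : ℝ) T,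
      HasDerivAt (Y i)
        ((N : ℝ)⁻¹ • ∑ j ∈ univ.erase i,
            ContinuousLinearMap.adjoint (fderiv ℝ w (X j t - X i t)) (Y j t)
          - (N : ℝ)⁻¹ • ∑ j ∈ univ.erase i,
            ContinuousLinearMap.adjoint (fderiv ℝ w (X i t - X j t)) (Y i t)) t)
    (hYT : ∀ i, Y i T = gradient ν (X i T)) :
    ∀ (i : Fin N), ∀ t ∈ Icc (0 : ℝ) T, Y i t = hN' t (X i t) := by
  have hwdiff : Differentiable ℝ w := hw.differentiable two_ne_zero
  -- `w 0 = 0`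
  have hw0 : w 0 = 0 := by
    have h := hwodd 0
    rw [neg_zero] at h
    have h2 : (2 : ℝ) • w 0 = 0 := by
      rw [two_smul]
      nth_rewrite 1 [h]
      abel
    simpa using (smul_eq_zero.1 h2).resolve_left (by norm_num)
  -- `Dw` is even
  have hDweven : ∀ r : Euc d, fderiv ℝ w (-r) = fderiv ℝ w r := by
    intro r
    have h1 : HasFDerivAt (fun x : Euc d => w (-x))
        ((fderiv ℝ w (-r)).comp (-(ContinuousLinearMap.id ℝ (Euc d)))) r :=
      (hwdiff (-r)).hasFDerivAt.comp r (hasFDerivAt_id r).neg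
    have h2 : HasFDerivAt (fun x : Euc d => -(w x)) (-(fderiv ℝ w r)) r :=
      (hwdiff r).hasFDerivAt.neg
    have heq : (fun x : Euc d => w (-x)) = fun x => -(w x) := funext hwodd
    rw [heq] at h1
    have huniq := h1.unique h2
    refine ContinuousLinearMap.ext fun b => ?_
    have hb := ContinuousLinearMap.ext_iff.1 huniq (-b)
    simpa using hb
  have hC0 : 0 ≤ C_bdd := by
    have := hwbdd 0
    have h1 := norm_nonneg (w 0)
    have h2 := norm_nonneg (fderiv ℝ w 0)
    have h3 := norm_nonneg (fderiv ℝ (fderiv ℝ w) 0)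
    linarith
  have hDwle : ∀ r : Euc d, ‖fderiv ℝ w r‖ ≤ C_bdd := by
    intro r
    have := hwbdd r
    have h1 := norm_nonneg (w r)
    have h3 := norm_nonneg (fderiv ℝ (fderiv ℝ w) r)
    linarith
  have hNne : (N : ℝ) ≠ 0 := Nat.cast_ne_zero.2 (by omega)
  have hNpos : (0 : ℝ) < N := by positivity
  -- the linear (in `Z`) vector field
  set A : Fin N → Fin N → ℝ → (Euc d →L[ℝ] Euc d) :=
    fun i j t => ContinuousLinearMap.adjoint (fderiv ℝ w (X i t - X j t)) with hA
  set v : ℝ → (Fin N → Euc d) → (Fin N → Euc d) := fun t Z i =>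
    (N : ℝ)⁻¹ • ∑ j ∈ univ.erase i, A i j t (Z j)
      - (N : ℝ)⁻¹ • ∑ j ∈ univ.erase i, A i j t (Z i) with hv
  have hAle : ∀ i j t, ‖A i j t‖ ≤ C_bdd := by
    intro i j t
    rw [hA]
    rw [LinearIsometryEquiv.norm_map]
    exact hDwle _
  -- Lipschitz bound
  have hlip : ∀ t, LipschitzWith (⟨2 * C_bdd, by positivity⟩ : NNReal) (v t) := by
    intro t
    apply LipschitzWith.of_dist_le_mul
    intro Z Z'
    have hKD : (0 : ℝ) ≤ 2 * C_bdd * dist Z Z' := by positivity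
    change dist (v t Z) (v t Z') ≤ 2 * C_bdd * dist Z Z'
    rw [dist_pi_le_iff hKD]
    intro i
    rw [dist_eq_norm]
    have bnd : ∀ f : Fin N → Euc d, (∀ j, ‖f j‖ ≤ dist Z Z') →
        ‖(N : ℝ)⁻¹ • ∑ j ∈ univ.erase i, A i j t (f j)‖ ≤ C_bdd * dist Z Z' := by
      intro f hf
      rw [norm_smul]
      have h1 : ‖∑ j ∈ univ.erase i, A i j t (f j)‖
          ≤ ∑ _j ∈ univ.erase i, C_bdd * dist Z Z' :=
        norm_sum_le_of_le _ fun j _ =>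
          ((A i j t).le_opNorm (f j)).trans
            (mul_le_mul (hAle i j t) (hf j) (norm_nonneg _) hC0)
      rw [Finset.sum_const, nsmul_eq_mul] at h1
      have hcard : (((univ.erase i).card : ℝ)) ≤ (N : ℝ) := by
        have : (univ.erase i).card ≤ N := le_trans (Finset.card_erase_le) (by simp)
        exact_mod_cast this
      have h2 : ‖(N : ℝ)⁻¹‖ = (N : ℝ)⁻¹ := by
        rw [Real.norm_eq_abs, abs_of_nonneg (by positivity)]
      rw [h2]
      calc (N : ℝ)⁻¹ * ‖∑ j ∈ univ.erase i, A i j t (f j)‖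
          ≤ (N : ℝ)⁻¹ * (((univ.erase i).card : ℝ) * (C_bdd * dist Z Z')) := by
            apply mul_le_mul_of_nonneg_left h1 (by positivity)
        _ ≤ (N : ℝ)⁻¹ * ((N : ℝ) * (C_bdd * dist Z Z')) := by
            apply mul_le_mul_of_nonneg_left _ (by positivity)
            apply mul_le_mul_of_nonneg_right hcard (by positivity)
        _ = C_bdd * dist Z Z' := by field_simp
    have hdiff : v t Z i - v t Z' i
        = (N : ℝ)⁻¹ • ∑ j ∈ univ.erase i, A i j t (Z j - Z' j)
          - (N : ℝ)⁻¹ • ∑ j ∈ univ.erase i, A i j t (Z i - Z' i) := by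
      simp only [hv, map_sub, Finset.sum_sub_distrib, smul_sub]
      abel
    rw [hdiff]
    calc ‖_ - _‖ ≤ ‖(N : ℝ)⁻¹ • ∑ j ∈ univ.erase i, A i j t (Z j - Z' j)‖
        + ‖(N : ℝ)⁻¹ • ∑ j ∈ univ.erase i, A i j t (Z i - Z' i)‖ := norm_sub_le _ _
      _ ≤ C_bdd * dist Z Z' + C_bdd * dist Z Z' := by
          apply add_le_add
          · exact bnd _ fun j => by
              rw [← dist_eq_norm]; exact dist_le_pi_dist Z Z' j
          · exact bnd _ fun _ => by
              rw [← dist_eq_norm]; exact dist_le_pi_dist Z Z' i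
      _ = 2 * C_bdd * dist Z Z' := by ring
  -- derivative of `t ↦ hN' t (X i t)`
  have hgderiv : ∀ i, ∀ t ∈ Icc (0 : ℝ) T,
      HasDerivAt (fun s => hN' s (X i s)) (v t (fun j => hN' t (X j t)) i) t := by
    intro i t ht
    set F : ℝ × Euc d → Euc d := fun p => hN' p.1 p.2 with hF
    have hFd : ∀ p : ℝ × Euc d, HasFDerivAt F (fderiv ℝ F p) p :=
      fun p => (hhN.differentiable one_ne_zero p).hasFDerivAt
    set Xi' : Euc d := (N : ℝ)⁻¹ • ∑ j ∈ univ.erase i, w (X i t - X j t) with hXi'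
    have hcurve : HasDerivAt (fun s => ((s, X i s) : ℝ × Euc d)) (1, Xi') t :=
      (hasDerivAt_id t).prodMk (hX i t ht)
    have hcomp : HasDerivAt (fun s => hN' s (X i s)) (fderiv ℝ F (t, X i t) (1, Xi')) t :=
      by have := (hFd (t, X i t)).comp_hasDerivAt t hcurve; exact this
    have hpart1 : deriv (fun s => hN' s (X i t)) t = fderiv ℝ F (t, X i t) (1, 0) := by
      have h : HasDerivAt (fun s => hN' s (X i t)) (fderiv ℝ F (t, X i t) (1, 0)) t :=
        by have := (hFd (t, X i t)).comp_hasDerivAt t ((hasDerivAt_id t).prodMk (hasDerivAt_const t (X i t))); exact this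
      exact h.deriv
    have hpart2 : ∀ b : Euc d, fderiv ℝ (hN' t) (X i t) b = fderiv ℝ F (t, X i t) (0, b) := by
      intro b
      have h0 : HasFDerivAt (fun y : Euc d => ((t, y) : ℝ × Euc d))
          ((0 : Euc d →L[ℝ] ℝ).prod (ContinuousLinearMap.id ℝ (Euc d))) (X i t) :=
        (hasFDerivAt_const t _).prodMk (hasFDerivAt_id _)
      have h : HasFDerivAt (hN' t)
          ((fderiv ℝ F (t, X i t)).comp
            ((0 : Euc d →L[ℝ] ℝ).prod (ContinuousLinearMap.id ℝ (Euc d)))) (X i t) :=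
        (hFd (t, X i t)).comp _ h0
      rw [h.fderiv]
      simp
    have hsplit : fderiv ℝ F (t, X i t) (1, Xi')
        = fderiv ℝ F (t, X i t) (1, 0) + fderiv ℝ F (t, X i t) (0, Xi') := by
      rw [← map_add]
      norm_num
    have hsum : (N : ℝ)⁻¹ • ∑ j : Fin N, w (X i t - X j t) = Xi' := by
      rw [hXi']
      congr 1
      rw [← Finset.sum_erase_add univ _ (mem_univ i)]
      simp [hw0]
    have hpde := hhNPDE t ht (X i t)
    rw [hsum] at hpde
    have hpde' : deriv (fun s => hN' s (X i t)) t + fderiv ℝ (hN' t) (X i t) Xi'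
        = (N : ℝ)⁻¹ • ∑ j : Fin N,
            ContinuousLinearMap.adjoint (fderiv ℝ w (X i t - X j t)) (hN' t (X j t))
          - (N : ℝ)⁻¹ • ∑ j : Fin N,
            ContinuousLinearMap.adjoint (fderiv ℝ w (X i t - X j t)) (hN' t (X i t)) := by
      have h := hpde
      have := sub_eq_zero.2 (rfl : (0 : Euc d) = 0)
      -- rearrange
      linear_combination (norm := abel) h
    have key : fderiv ℝ F (t, X i t) (1, Xi') = v t (fun j => hN' t (X j t)) i := by
      rw [hsplit, ← hpart1, ← hpart2, hpde']
      simp only [hv, hA]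
      rw [← Finset.sum_erase_add univ
          (fun j => ContinuousLinearMap.adjoint (fderiv ℝ w (X i t - X j t)) (hN' t (X j t)))
          (mem_univ i),
        ← Finset.sum_erase_add univ
          (fun j => ContinuousLinearMap.adjoint (fderiv ℝ w (X i t - X j t)) (hN' t (X i t)))
          (mem_univ i)]
      simp only [smul_add]
      abel
    rw [← key]
    exact hcomp
  -- `Y` satisfies the same ODE, using evenness of `Dw`
  have hYderiv : ∀ i, ∀ t ∈ Icc (0 : ℝ) T,
      HasDerivAt (Y i) (v t (fun j => Y j t) i) t := by
    intro i t ht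
    have heven : ∀ j, fderiv ℝ w (X j t - X i t) = fderiv ℝ w (X i t - X j t) := by
      intro j
      rw [← neg_sub (X i t) (X j t), hDweven]
    have h := hY i t ht
    have : ((N : ℝ)⁻¹ • ∑ j ∈ univ.erase i,
          ContinuousLinearMap.adjoint (fderiv ℝ w (X j t - X i t)) (Y j t)
        - (N : ℝ)⁻¹ • ∑ j ∈ univ.erase i,
          ContinuousLinearMap.adjoint (fderiv ℝ w (X i t - X j t)) (Y i t))
        = v t (fun j => Y j t) i := by
      simp only [hv, hA, heven]
    rwa [this] at h
  -- the two tuple trajectories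
  set Ft : ℝ → (Fin N → Euc d) := fun t i => Y i t with hFt
  set Gt : ℝ → (Fin N → Euc d) := fun t i => hN' t (X i t) with hGt
  have hFt' : ∀ t ∈ Icc (0 : ℝ) T, HasDerivAt Ft (v t (Ft t)) t := by
    intro t ht
    exact hasDerivAt_pi.2 fun i => hYderiv i t ht
  have hGt' : ∀ t ∈ Icc (0 : ℝ) T, HasDerivAt Gt (v t (Gt t)) t := by
    intro t ht
    exact hasDerivAt_pi.2 fun i => hgderiv i t ht
  have hend : Ft T = Gt T := by
    funext i
    simp only [hFt, hGt]
    rw [hYT i, hhNT]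
  have huniq : EqOn Ft Gt (Icc (0 : ℝ) T) := by
    apply ODE_solution_unique_of_mem_Icc_left
      (v := v) (s := fun _ => (univ : Set (Fin N → Euc d)))
      (fun t _ => (hlip t).lipschitzOnWith)
      (fun t ht => (hFt' t ht).continuousAt.continuousWithinAt)
      (fun t ht => (hFt' t (Ioc_subset_Icc_self ht)).hasDerivWithinAt)
      (fun _ _ => mem_univ _)
      (fun t ht => (hGt' t ht).continuousAt.continuousWithinAt)
      (fun t ht => (hGt' t (Ioc_subset_Icc_self ht)).hasDerivWithinAt)
      (fun _ _ => mem_univ _)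
      hend
  intro i t ht
  exact congrFun (huniq ht) i
end
end

section
/- Under the following hypotheses, let d ≥ 1, T > 0, N ≥ 1; let w : ℝ^d → ℝ^d be twice continuously differentiable, odd, with sup‖w‖ + sup‖Dw‖ + sup‖D²w‖ ≤ C_bdd; let ν : ℝ^d → ℝ be continuously differentiable; let X_1, …, X_N : [0,T] → ℝ^d be differentiable with X_i'(t) = (1/N) Σ_{j≠i} w(X_i(t) − X_j(t)); let h_N : [0,T] × ℝ^d → ℝ^d be continuously differentiable solving ∂_t h_N(t,x) + ((1/N) Σ_{j=1}^N w(x − X_j(t))) · ∇_x h_N(t,x) − (1/N) Σ_{j=1}^N (Dw(x − X_j(t)))ᵀ h_N(t, X_j(t)) + ((1/N) Σ_{j=1}^N (Dw(x − X_j(t)))ᵀ) h_N(t,x) = 0 with h_N(T,x) = ∇ν(x); and let Y_1, …, Y_N : [0,T] → ℝ^d be differentiable with Y_i'(t) + (1/N) Σ_{j≠i} (Dw(X_i(t) − X_j(t)))ᵀ Y_i(t) − (1/N) Σ_{j≠i} (Dw(X_j(t) − X_i(t)))ᵀ Y_j(t) = 0 and Y_i(T) = ∇ν(X_i(T)). Then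 for every continuous φ : ℝ^d → ℝ^d with φ(0) = 0, one has (1/N²) Σ_{i=1}^N Σ_{j=1}^N ∫₀^T ⟨h_N(t, X_i(t)), φ(X_i(t) − X_j(t))⟩ dt = (1/N²) Σ_{i=1}^N Σ_{j≠i} ∫₀^T ⟨Y_i(t), φ(X_i(t) − X_j(t))⟩ dt. -/
open MeasureTheory Set Finset
open scoped RealInnerProductSpace BigOperators

noncomputable section

set_option maxHeartbeats 1600000 in
/-- (Theorem 3.4, tested form.) With the initial data of the mean-field
PDE taken to be the empirical measure of the `N` particles, the tested first variation of
the PDE objective with respect to the kernel equals the tested first variation of the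
particle objective. -/
theorem empirical_pde_gradient_eq_particle_gradient
    (d : ℕ) (hd : 1 ≤ d) (T : ℝ) (hT : 0 < T) (N : ℕ) (hN : 1 ≤ N)
    (w : Euc d → Euc d) (hw : ContDiff ℝ 2 w)
    (hwodd : ∀ r : Euc d, w (-r) = -w r)
    (C_bdd : ℝ)
    (hwbdd : ∀ r : Euc d,
      ‖w r‖ + ‖fderiv ℝ w r‖ + ‖fderiv ℝ (fderiv ℝ w) r‖ ≤ C_bdd)
    (ν : Euc d → ℝ) (hν : ContDiff ℝ 1 ν)
    (X : Fin N → ℝ → Euc d)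
    (hX : ∀ i, ∀ t ∈ Icc (0 : ℝ) T,
      HasDerivAt (X i)
        ((N : ℝ)⁻¹ • ∑ j ∈ univ.erase i, w (X i t - X j t)) t)
    (hN' : ℝ → Euc d → Euc d)
    (hhN : ContDiff ℝ 1 (fun p : ℝ × Euc d => hN' p.1 p.2))
    (hhNPDE : ∀ t ∈ Icc (0 : ℝ) T, ∀ x : Euc d,
      deriv (fun s => hN' s x) t
        + fderiv ℝ (hN' t) x ((N : ℝ)⁻¹ • ∑ j : Fin N, w (x - X j t))
        - (N : ℝ)⁻¹ • ∑ j : Fin N,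
            ContinuousLinearMap.adjoint (fderiv ℝ w (x - X j t)) (hN' t (X j t))
        + (N : ℝ)⁻¹ • ∑ j : Fin N,
            ContinuousLinearMap.adjoint (fderiv ℝ w (x - X j t)) (hN' t x) = 0)
    (hhNT : ∀ x : Euc d, hN' T x = gradient ν x)
    (Y : Fin N → ℝ → Euc d)
    (hY : ∀ i, ∀ t ∈ Icc (0 : ℝ) T,
      HasDerivAt (Y i)
        ((N : ℝ)⁻¹ • ∑ j ∈ univ.erase i,
            ContinuousLinearMap.adjoint (fderiv ℝ w (X j t - X i t)) (Y j t)
          - (N : ℝ)⁻¹ • ∑ j ∈ univ.erase i,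
            ContinuousLinearMap.adjoint (fderiv ℝ w (X i t - X j t)) (Y i t)) t)
    (hYT : ∀ i, Y i T = gradient ν (X i T)) :
    ∀ (φ : Euc d → Euc d), Continuous φ → φ 0 = 0 →
      ((N : ℝ) ^ 2)⁻¹ * ∑ i : Fin N, ∑ j : Fin N,
          ∫ t in (0 : ℝ)..T, ⟪hN' t (X i t), φ (X i t - X j t)⟫
        = ((N : ℝ) ^ 2)⁻¹ * ∑ i : Fin N, ∑ j ∈ univ.erase i,
            ∫ t in (0 : ℝ)..T, ⟪Y i t, φ (X i t - X j t)⟫ := by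
  -- Preliminaries on `w`
  have hwdiff : Differentiable ℝ w := hw.differentiable two_ne_zero
  have hw0 : w 0 = 0 := by
    have h := hwodd 0
    rw [neg_zero] at h
    have h2 : (2:ℝ) • w 0 = 0 := by rw [two_smul]; nth_rewrite 1 [h]; exact neg_add_cancel _
    simpa using (smul_eq_zero.mp h2).resolve_left (by norm_num)
  have hDweven : ∀ r : Euc d, fderiv ℝ w (-r) = fderiv ℝ w r := by
    intro r
    have h1 : HasFDerivAt (fun x : Euc d => w (-x))
        ((fderiv ℝ w (-r)).comp (-(ContinuousLinearMap.id ℝ (Euc d)))) r :=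
      (hwdiff (-r)).hasFDerivAt.comp r ((hasFDerivAt_id r).neg)
    have h2 : HasFDerivAt (fun x : Euc d => w (-x)) (-(fderiv ℝ w r)) r := by
      have h := ((hwdiff r).hasFDerivAt).neg
      have e : (fun x : Euc d => w (-x)) = fun x => -w x := funext fun x => hwodd x
      rw [e]; exact h
    have h3 := h1.unique h2
    refine ContinuousLinearMap.ext fun v => ?_
    have h4 := ContinuousLinearMap.ext_iff.mp h3 (-v)
    simpa using h4
  have hCnn : 0 ≤ C_bdd := by
    have := hwbdd 0
    have h1 := norm_nonneg (w 0)
    have h2 := norm_nonneg (fderiv ℝ w 0)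
    have h3 := norm_nonneg (fderiv ℝ (fderiv ℝ w) 0)
    linarith
  have hDwbdd : ∀ r : Euc d, ‖fderiv ℝ w r‖ ≤ C_bdd := by
    intro r
    have := hwbdd r
    have h1 := norm_nonneg (w r)
    have h3 := norm_nonneg (fderiv ℝ (fderiv ℝ w) r)
    linarith
  have hNpos : (0:ℝ) < N := by exact_mod_cast Nat.lt_of_lt_of_le Nat.zero_lt_one hN
  -- The vector field of the coupled linear ODE
  set v : ℝ → (Fin N → Euc d) → (Fin N → Euc d) := fun t D i =>
    (N : ℝ)⁻¹ • ∑ j ∈ univ.erase i,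
        ContinuousLinearMap.adjoint (fderiv ℝ w (X j t - X i t)) (D j)
      - (N : ℝ)⁻¹ • ∑ j ∈ univ.erase i,
        ContinuousLinearMap.adjoint (fderiv ℝ w (X i t - X j t)) (D i) with hv_def
  -- adjoint norm bound
  have hadjbdd : ∀ r : Euc d,
      ‖(ContinuousLinearMap.adjoint (fderiv ℝ w r) : Euc d →L[ℝ] Euc d)‖ ≤ C_bdd := by
    intro r
    rw [ContinuousLinearMap.adjoint.norm_map]
    exact hDwbdd r
  -- Lipschitz estimate
  have hvlip : ∀ t, LipschitzWith (Real.toNNReal (2 * C_bdd)) (v t) := by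
    intro t
    apply LipschitzWith.of_dist_le_mul
    intro D D'
    rw [Real.coe_toNNReal _ (by positivity)]
    rw [dist_pi_le_iff (by positivity)]
    intro i
    rw [dist_eq_norm]
    have hbnd : ∀ (M : Fin N → (Euc d →L[ℝ] Euc d)) (u : Fin N → Euc d),
        (∀ j, ‖M j‖ ≤ C_bdd) → (∀ j, ‖u j‖ ≤ dist D D') →
        ‖(N : ℝ)⁻¹ • ∑ j ∈ univ.erase i, M j (u j)‖ ≤ C_bdd * dist D D' := by
      intro M u hM hu
      rw [norm_smul, norm_inv, Real.norm_natCast]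
      have h1 : ‖∑ j ∈ univ.erase i, M j (u j)‖ ≤ (N:ℝ) * (C_bdd * dist D D') := by
        calc ‖∑ j ∈ univ.erase i, M j (u j)‖ ≤ ∑ j ∈ univ.erase i, ‖M j (u j)‖ :=
              norm_sum_le _ _
          _ ≤ ∑ j ∈ univ.erase i, C_bdd * dist D D' := by
              refine Finset.sum_le_sum fun j _ => ?_
              calc ‖M j (u j)‖ ≤ ‖M j‖ * ‖u j‖ := (M j).le_opNorm _
                _ ≤ C_bdd * dist D D' :=
                  mul_le_mul (hM j) (hu j) (norm_nonneg _) hCnn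
          _ ≤ (N:ℝ) * (C_bdd * dist D D') := by
              rw [Finset.sum_const, nsmul_eq_mul]
              refine mul_le_mul_of_nonneg_right ?_ (by positivity)
              have : #(univ.erase i) ≤ N := le_trans Finset.card_erase_le (by simp)
              exact_mod_cast this
      calc (N:ℝ)⁻¹ * ‖∑ j ∈ univ.erase i, M j (u j)‖
          ≤ (N:ℝ)⁻¹ * ((N:ℝ) * (C_bdd * dist D D')) :=
            mul_le_mul_of_nonneg_left h1 (by positivity)
        _ = C_bdd * dist D D' := by field_simp
    have hdiff : v t D i - v t D' i
        = (N : ℝ)⁻¹ • ∑ j ∈ univ.erase i,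
            ContinuousLinearMap.adjoint (fderiv ℝ w (X j t - X i t)) (D j - D' j)
          - (N : ℝ)⁻¹ • ∑ j ∈ univ.erase i,
            ContinuousLinearMap.adjoint (fderiv ℝ w (X i t - X j t)) (D i - D' i) := by
      simp only [hv_def, map_sub, Finset.sum_sub_distrib, smul_sub]
      abel
    calc ‖v t D i - v t D' i‖
        = ‖(N : ℝ)⁻¹ • ∑ j ∈ univ.erase i,
            ContinuousLinearMap.adjoint (fderiv ℝ w (X j t - X i t)) (D j - D' j)
          - (N : ℝ)⁻¹ • ∑ j ∈ univ.erase i,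
            ContinuousLinearMap.adjoint (fderiv ℝ w (X i t - X j t)) (D i - D' i)‖ := by
          rw [hdiff]
      _ ≤ ‖(N : ℝ)⁻¹ • ∑ j ∈ univ.erase i,
            ContinuousLinearMap.adjoint (fderiv ℝ w (X j t - X i t)) (D j - D' j)‖
          + ‖(N : ℝ)⁻¹ • ∑ j ∈ univ.erase i,
            ContinuousLinearMap.adjoint (fderiv ℝ w (X i t - X j t)) (D i - D' i)‖ :=
          norm_sub_le _ _
      _ ≤ C_bdd * dist D D' + C_bdd * dist D D' := by
          refine add_le_add
            (hbnd _ _ (fun j => hadjbdd _) fun j => ?_)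
            (hbnd _ _ (fun j => hadjbdd _) fun j => ?_)
          · rw [dist_eq_norm]
            exact (norm_le_pi_norm (D - D') j).trans_eq' (by simp)
          · rw [dist_eq_norm]
            exact (norm_le_pi_norm (D - D') i).trans_eq' (by simp)
      _ = 2 * C_bdd * dist D D' := by ring
  -- The two candidate solutions
  set Zf : ℝ → Fin N → Euc d := fun t i => hN' t (X i t) with hZf_def
  set Yf : ℝ → Fin N → Euc d := fun t i => Y i t with hYf_def
  -- Z solves the ODE
  have hFdiff : Differentiable ℝ (fun p : ℝ × Euc d => hN' p.1 p.2) :=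
    hhN.differentiable one_ne_zero
  have hZode : ∀ t ∈ Icc (0:ℝ) T, HasDerivAt Zf (v t (Zf t)) t := by
    intro t ht
    rw [hasDerivAt_pi]
    intro i
    set F := fun p : ℝ × Euc d => hN' p.1 p.2 with hF
    set x := X i t with hx_def
    set L := fderiv ℝ F (t, x) with hL
    set Vi := (N : ℝ)⁻¹ • ∑ j ∈ univ.erase i, w (X i t - X j t) with hVi
    have hFp : HasFDerivAt F L (t, x) := (hFdiff (t, x)).hasFDerivAt
    have hcomp : HasDerivAt (fun s => F (s, X i s)) (L (1, Vi)) t :=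
      HasFDerivAt.comp_hasDerivAt (l := F) (l' := L) t hFp (HasDerivAt.prodMk (hasDerivAt_id t) (hX i t ht))
    have h1 : deriv (fun s => hN' s x) t = L (1, 0) := by
      have hp : HasDerivAt (fun s => F (s, x)) (L (1, 0)) t := by
        have := hFp.comp_hasDerivAt t (HasDerivAt.prodMk (hasDerivAt_id t) (hasDerivAt_const t x))
        exact this
      exact hp.deriv
    have h2 : fderiv ℝ (hN' t) x Vi = L (0, Vi) := by
      have hx : HasFDerivAt (hN' t)
          (L.comp ((0 : Euc d →L[ℝ] ℝ).prod (ContinuousLinearMap.id ℝ (Euc d)))) x := by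
        have := hFp.comp x (HasFDerivAt.prodMk (hasFDerivAt_const t x) (hasFDerivAt_id x))
        exact this
      rw [hx.fderiv]
      simp
    -- PDE at x
    have hpde := hhNPDE t ht x
    have hvel : (N:ℝ)⁻¹ • ∑ j : Fin N, w (x - X j t) = Vi := by
      rw [hVi]
      congr 1
      rw [← Finset.add_sum_erase _ _ (mem_univ i)]
      simp [hx_def, sub_self, hw0]
    rw [hvel, h1] at hpde
    have h2' : fderiv ℝ (hN' t) x Vi = L (0, Vi) := h2
    rw [h2'] at hpde
    -- so L(1,Vi) = S1 - S2
    have hLsplit : L (1, Vi) = L (1, 0) + L (0, Vi) := by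
      rw [← map_add]
      norm_num
    have hLval : L (1, Vi)
        = (N : ℝ)⁻¹ • ∑ j : Fin N,
            ContinuousLinearMap.adjoint (fderiv ℝ w (x - X j t)) (hN' t (X j t))
          - (N : ℝ)⁻¹ • ∑ j : Fin N,
            ContinuousLinearMap.adjoint (fderiv ℝ w (x - X j t)) (hN' t x) := by
      rw [hLsplit, ← sub_eq_zero]
      rw [show (L (1, 0) + L (0, Vi))
          - ((N : ℝ)⁻¹ • ∑ j : Fin N,
              ContinuousLinearMap.adjoint (fderiv ℝ w (x - X j t)) (hN' t (X j t))
            - (N : ℝ)⁻¹ • ∑ j : Fin N,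
              ContinuousLinearMap.adjoint (fderiv ℝ w (x - X j t)) (hN' t x))
          = L (1, 0) + L (0, Vi)
            - (N : ℝ)⁻¹ • ∑ j : Fin N,
              ContinuousLinearMap.adjoint (fderiv ℝ w (x - X j t)) (hN' t (X j t))
            + (N : ℝ)⁻¹ • ∑ j : Fin N,
              ContinuousLinearMap.adjoint (fderiv ℝ w (x - X j t)) (hN' t x) from by abel]
      exact hpde
    -- identify with v t (Zf t) i
    have hvz : (N : ℝ)⁻¹ • ∑ j : Fin N,
            ContinuousLinearMap.adjoint (fderiv ℝ w (x - X j t)) (hN' t (X j t))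
          - (N : ℝ)⁻¹ • ∑ j : Fin N,
            ContinuousLinearMap.adjoint (fderiv ℝ w (x - X j t)) (hN' t x)
        = v t (Zf t) i := by
      have e1 : ∑ j : Fin N,
          ContinuousLinearMap.adjoint (fderiv ℝ w (x - X j t)) (hN' t (X j t))
          = ContinuousLinearMap.adjoint (fderiv ℝ w (0 : Euc d)) (hN' t x)
            + ∑ j ∈ univ.erase i,
              ContinuousLinearMap.adjoint (fderiv ℝ w (X j t - X i t)) (hN' t (X j t)) := by
        rw [← Finset.add_sum_erase _ _ (mem_univ i)]
        congr 1
        · rw [hx_def, sub_self]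
        · refine Finset.sum_congr rfl fun j _ => ?_
          congr 2
          rw [hx_def, ← hDweven (X j t - X i t), neg_sub]
      have e2 : ∑ j : Fin N,
          ContinuousLinearMap.adjoint (fderiv ℝ w (x - X j t)) (hN' t x)
          = ContinuousLinearMap.adjoint (fderiv ℝ w (0 : Euc d)) (hN' t x)
            + ∑ j ∈ univ.erase i,
              ContinuousLinearMap.adjoint (fderiv ℝ w (X i t - X j t)) (hN' t x) := by
        rw [← Finset.add_sum_erase _ _ (mem_univ i)]
        congr 1
        rw [hx_def, sub_self]
      rw [e1, e2, smul_add, smul_add, hv_def]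
      simp only [hZf_def]
      abel
    rw [← hvz, ← hLval]
    exact hcomp
  -- Y solves the same ODE
  have hYode : ∀ t ∈ Icc (0:ℝ) T, HasDerivAt Yf (v t (Yf t)) t := by
    intro t ht
    rw [hasDerivAt_pi]
    intro i
    exact hY i t ht
  -- uniqueness (backward in time)
  have hTmem : T ∈ Icc (0:ℝ) T := ⟨hT.le, le_rfl⟩
  have hTeq : Zf T = Yf T := by
    funext i
    simp only [hZf_def, hYf_def, hhNT, hYT]
  have heqOn : EqOn Zf Yf (Icc (0:ℝ) T) := by
    refine ODE_solution_unique_of_mem_Icc_left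
      (v := v) (s := fun _ => (Set.univ : Set (Fin N → Euc d)))
      (K := Real.toNNReal (2 * C_bdd))
      (fun t _ => (hvlip t).lipschitzOnWith)
      ?_ ?_ (fun _ _ => trivial) ?_ ?_ (fun _ _ => trivial) hTeq
    · intro t ht
      exact (hZode t ht).continuousAt.continuousWithinAt
    · intro t ht
      exact (hZode t (Ioc_subset_Icc_self ht)).hasDerivWithinAt
    · intro t ht
      exact (hYode t ht).continuousAt.continuousWithinAt
    · intro t ht
      exact (hYode t (Ioc_subset_Icc_self ht)).hasDerivWithinAt
  have hZY : ∀ i, ∀ t ∈ Icc (0:ℝ) T, hN' t (X i t) = Y i t := by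
    intro i t ht
    have := congrFun (heqOn ht) i
    simpa [hZf_def, hYf_def] using this
  -- Conclusion
  intro φ hφc hφ0
  congr 1
  refine Finset.sum_congr rfl fun i _ => ?_
  rw [← Finset.add_sum_erase _ _ (mem_univ i)]
  have hdiag : (∫ t in (0:ℝ)..T, ⟪hN' t (X i t), φ (X i t - X i t)⟫) = 0 := by
    simp [sub_self, hφ0]
  rw [hdiag, zero_add]
  refine Finset.sum_congr rfl fun j hj => ?_
  refine intervalIntegral.integral_congr fun t ht => ?_
  rw [uIcc_of_le hT.le] at ht
  rw [hZY i t ht]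
end
end

section
/- Let d ≥ 1 and T > 0. Let w : ℝ^d → ℝ^d be continuously differentiable with sup_x ‖w(x)‖ ≤ C_bdd and sup_x ‖Dw(x)‖ ≤ C_bdd (operator norm of the Jacobian). Let ν : ℝ^d → ℝ be continuously differentiable with bounded gradient. Let (μ_t)_{t∈[0,T]} be a family of Borel probability measures on ℝ^d such that (t,x) ↦ ∫ w(x−y) dμ_t(y) and (t,x) ↦ ∫ Dw(x−y) dμ_t(y) are continuous. Let h : [0,T] × ℝ^d → ℝ^d be bounded, continuously differentiable, and satisfy for all (t,x): ∂_t h(t,x) + (∫ w(x−y) dμ_t(y))·∇_x h(t,x) − ∫ (Dw(x−y))ᵀ h(t,y) dμ_t(y) + (∫ (Dw(x−y))ᵀ dμ_t(y)) h(t,x) = 0, with terminal condition h(T,x) = ∇ν(x). Then for all t ∈ [0,T] and all x ∈ ℝ^d: ‖h(t,x)‖ ≤ e^{2 C_bdd (T−t)} · sup_z ‖∇ν(z)‖. -/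
open MeasureTheory Set Real
open scoped RealInnerProductSpace BigOperators

noncomputable section

set_option maxHeartbeats 1600000 in
/-- (Lemma B.1.) The adjoint state `h` driven by any flow of probability
measures is uniformly bounded by `e^{2 C_bdd (T−t)} · sup‖∇ν‖`. -/
theorem adjoint_state_uniform_bound
    (d : ℕ) (hd : 1 ≤ d) (T : ℝ) (hT : 0 < T)
    (w : Euc d → Euc d) (hw : ContDiff ℝ 1 w)
    (C_bdd : ℝ)
    (hwb : ∀ x : Euc d, ‖w x‖ ≤ C_bdd)
    (hwJ : ∀ x : Euc d, ‖fderiv ℝ w x‖ ≤ C_bdd)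
    (ν : Euc d → ℝ) (hν : ContDiff ℝ 1 ν)
    (hνg : ∃ G, ∀ x : Euc d, ‖gradient ν x‖ ≤ G)
    (μ : ℝ → Measure (Euc d))
    (hμprob : ∀ t ∈ Icc (0 : ℝ) T, IsProbabilityMeasure (μ t))
    (hμc : Continuous (fun p : ℝ × Euc d => ∫ y, w (p.2 - y) ∂(μ p.1)))
    (hμc' : Continuous (fun p : ℝ × Euc d => ∫ y, fderiv ℝ w (p.2 - y) ∂(μ p.1)))
    (h : ℝ → Euc d → Euc d)
    (hh : ContDiff ℝ 1 (fun p : ℝ × Euc d => h p.1 p.2))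
    (hhb : ∃ B, ∀ t ∈ Icc (0 : ℝ) T, ∀ x : Euc d, ‖h t x‖ ≤ B)
    (hhPDE : ∀ t ∈ Icc (0 : ℝ) T, ∀ x : Euc d,
      deriv (fun s => h s x) t
        + fderiv ℝ (h t) x (∫ y, w (x - y) ∂(μ t))
        - (∫ y, ContinuousLinearMap.adjoint (fderiv ℝ w (x - y)) (h t y) ∂(μ t))
        + (∫ y, ContinuousLinearMap.adjoint (fderiv ℝ w (x - y)) (h t x) ∂(μ t))
        = 0)
    (hhT : ∀ x : Euc d, h T x = gradient ν x) :
    ∀ t ∈ Icc (0 : ℝ) T, ∀ x : Euc d,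
      ‖h t x‖ ≤ Real.exp (2 * C_bdd * (T - t)) * (⨆ z : Euc d, ‖gradient ν z‖) := by
  obtain ⟨G, hG⟩ := hνg
  obtain ⟨B, hB⟩ := hhb
  have hC : 0 ≤ C_bdd := le_trans (norm_nonneg _) (hwb 0)
  have h0T : (0:ℝ) ∈ Icc (0:ℝ) T := ⟨le_rfl, hT.le⟩
  have hB0 : 0 ≤ B := le_trans (norm_nonneg _) (hB 0 h0T 0)
  set S : ℝ := ⨆ z : Euc d, ‖gradient ν z‖ with hSdef
  have hbdd : BddAbove (Set.range fun z : Euc d => ‖gradient ν z‖) :=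
    ⟨G, by rintro _ ⟨z, rfl⟩; exact hG z⟩
  have hSle : ∀ z : Euc d, ‖gradient ν z‖ ≤ S := fun z => le_ciSup hbdd z
  have hS0 : 0 ≤ S := le_trans (norm_nonneg _) (hSle 0)
  -- the velocity field
  set v : ℝ → Euc d → Euc d := fun t x => ∫ y, w (x - y) ∂ μ t with hvdef
  have hmeas : ∀ (t : ℝ) (x : Euc d),
      AEStronglyMeasurable (fun y : Euc d => w (x - y)) (μ t) := fun t x =>
    (hw.continuous.comp (continuous_const.sub continuous_id)).aestronglyMeasurable
  have hint : ∀ t ∈ Icc (0:ℝ) T, ∀ x : Euc d, Integrable (fun y => w (x - y)) (μ t) := by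
    intro t ht x
    haveI := hμprob t ht
    exact (integrable_const C_bdd).mono' (hmeas t x) (ae_of_all _ fun y => hwb _)
  have hvb : ∀ t ∈ Icc (0:ℝ) T, ∀ x : Euc d, ‖v t x‖ ≤ C_bdd := by
    intro t ht x
    haveI := hμprob t ht
    refine (norm_integral_le_of_norm_le (integrable_const C_bdd)
      (ae_of_all _ fun y => hwb _)).trans ?_
    simp [measure_univ]
  have hwlip : LipschitzWith C_bdd.toNNReal w := by
    refine lipschitzWith_of_nnnorm_fderiv_le (hw.differentiable one_ne_zero) fun x => ?_
    rw [← NNReal.coe_le_coe, coe_nnnorm, Real.coe_toNNReal _ hC]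
    exact hwJ x
  have hvlip : ∀ t ∈ Icc (0:ℝ) T, LipschitzWith C_bdd.toNNReal (v t) := by
    intro t ht
    haveI := hμprob t ht
    refine LipschitzWith.of_dist_le_mul fun x x' => ?_
    rw [dist_eq_norm, Real.coe_toNNReal _ hC]
    have heq : v t x - v t x' = ∫ y, (w (x - y) - w (x' - y)) ∂ μ t :=
      (integral_sub (hint t ht x) (hint t ht x')).symm
    rw [hvdef]; rw [show (fun t x => ∫ y, w (x - y) ∂ μ t) t x - (fun t x => ∫ y, w (x - y) ∂ μ t) t x' = ∫ y, (w (x - y) - w (x' - y)) ∂ μ t from heq]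
    refine (norm_integral_le_of_norm_le (integrable_const (C_bdd * dist x x'))
      (ae_of_all _ fun y => ?_)).trans ?_
    · have hd := hwlip.dist_le_mul (x - y) (x' - y)
      rw [Real.coe_toNNReal _ hC, dist_sub_right] at hd
      rw [← dist_eq_norm]
      exact hd
    · simp [measure_univ]
  -- the key a priori estimate via characteristics
  have key : ∀ t₀ ∈ Icc (0:ℝ) T, ∀ x₀ : Euc d, ∀ φ : ℝ → ℝ, Continuous φ →
      (∀ s ∈ Icc (0:ℝ) T, ∀ x : Euc d, ‖h s x‖ ≤ φ s) →
      ‖h t₀ x₀‖ ≤ S + 2 * C_bdd * ∫ s in t₀..T, φ s := by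
    intro t₀ ht₀ x₀ φ hφc hφ
    have hsub : Icc t₀ T ⊆ Icc (0:ℝ) T := Icc_subset_Icc ht₀.1 le_rfl
    have ht₀T : t₀ ≤ T := ht₀.2
    -- solve the characteristic ODE
    have hpl : IsPicardLindelof v (tmin := t₀) (tmax := T) ⟨t₀, le_rfl, ht₀T⟩ x₀
        (C_bdd * T + 1).toNNReal 0 C_bdd.toNNReal C_bdd.toNNReal :=
      { lipschitzOnWith := fun t ht => (hvlip t (hsub ht)).lipschitzOnWith
        continuousOn := fun x _ => ((hμc.comp (continuous_id.prodMk (continuous_const : Continuous fun _ : ℝ => x))).continuousOn)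
        norm_le := fun t ht x _ => by rw [Real.coe_toNNReal _ hC]; exact hvb t (hsub ht) x
        mul_max_le := by
          dsimp only
          rw [sub_self, max_eq_left (sub_nonneg.2 ht₀T), Real.coe_toNNReal _ hC,
            Real.coe_toNNReal _ (by nlinarith [ht₀.1, hC]), NNReal.coe_zero, sub_zero]
          nlinarith [ht₀.1, hC] }
    obtain ⟨X, hX0, hX⟩ := hpl.exists_eq_forall_mem_Icc_hasDerivWithinAt₀
    have hXcont : ContinuousOn X (Icc t₀ T) := fun s hs => (hX s hs).continuousWithinAt
    set F : ℝ × Euc d → Euc d := fun p => h p.1 p.2 with hFdef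
    have hFd : Differentiable ℝ F := hh.differentiable one_ne_zero
    have hFc : Continuous fun p => fderiv ℝ F p := hh.continuous_fderiv one_ne_zero
    -- decomposition of the full derivative into partial derivatives
    have hdec : ∀ (s : ℝ) (x : Euc d) (u : Euc d), fderiv ℝ F (s, x) (1, u)
        = deriv (fun τ => h τ x) s + fderiv ℝ (h s) x u := by
      intro s x u
      have hFat : HasFDerivAt F (fderiv ℝ F (s, x)) (s, x) := (hFd (s, x)).hasFDerivAt
      have h1 : HasDerivAt (fun τ => h τ x) (fderiv ℝ F (s, x) (1, 0)) s := by
        have hcurve : HasDerivAt (fun τ : ℝ => (τ, x)) ((1:ℝ), (0:Euc d)) s :=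
          (hasDerivAt_id s).prodMk (hasDerivAt_const s x)
        exact hFat.comp_hasDerivAt s hcurve
      have h2 : HasFDerivAt (h s)
          ((fderiv ℝ F (s, x)).comp ((0 : Euc d →L[ℝ] ℝ).prod (ContinuousLinearMap.id ℝ (Euc d)))) x := by
        have hcurve : HasFDerivAt (fun z : Euc d => ((s:ℝ), z))
            ((0 : Euc d →L[ℝ] ℝ).prod (ContinuousLinearMap.id ℝ (Euc d))) x :=
          (hasFDerivAt_const s x).prodMk (hasFDerivAt_id x)
        exact hFat.comp x hcurve
      rw [h1.deriv, h2.fderiv]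
      have : fderiv ℝ F (s, x) (1, 0) +
          ((fderiv ℝ F (s, x)).comp ((0 : Euc d →L[ℝ] ℝ).prod (ContinuousLinearMap.id ℝ (Euc d)))) u
          = fderiv ℝ F (s, x) ((1, 0) + (0, u)) := by
        rw [map_add]
        simp
      rw [this]
      norm_num
    -- the derivative of h along the characteristic
    have hgderiv : ∀ s ∈ Icc t₀ T, HasDerivWithinAt (fun τ => h τ (X τ))
        (fderiv ℝ F (s, X s) (1, v s (X s))) (Icc t₀ T) s := by
      intro s hs
      have hcurve : HasDerivWithinAt (fun τ : ℝ => (τ, X τ)) ((1:ℝ), v s (X s)) (Icc t₀ T) s :=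
        (hasDerivWithinAt_id s _).prodMk (hX s hs)
      exact (hFd (s, X s)).hasFDerivAt.comp_hasDerivWithinAt s hcurve
    have hpcont : ContinuousOn (fun s : ℝ => ((s : ℝ), X s)) (Icc t₀ T) :=
      continuousOn_id.prodMk hXcont
    have hdXcont : ContinuousOn (fun s => fderiv ℝ F (s, X s) (1, v s (X s))) (Icc t₀ T) := by
      refine ContinuousOn.clm_apply (hFc.comp_continuousOn hpcont) ?_
      exact continuousOn_const.prodMk (hμc.comp_continuousOn hpcont)
    have hgcont : ContinuousOn (fun s => h s (X s)) (Icc t₀ T) :=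
      hh.continuous.comp_continuousOn hpcont
    have hFTC : ∫ s in t₀..T, fderiv ℝ F (s, X s) (1, v s (X s))
        = h T (X T) - h t₀ (X t₀) := by
      refine intervalIntegral.integral_eq_sub_of_hasDeriv_right_of_le ht₀T hgcont ?_ ?_
      · intro s hs
        exact (((hgderiv s (Ioo_subset_Icc_self hs)).hasDerivAt
          (Icc_mem_nhds hs.1 hs.2)).hasDerivWithinAt)
      · exact hdXcont.intervalIntegrable_of_Icc ht₀T
    -- pointwise norm bound on the derivative
    have hnorm : ∀ s ∈ Icc t₀ T,
        ‖fderiv ℝ F (s, X s) (1, v s (X s))‖ ≤ 2 * C_bdd * φ s := by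
      intro s hs
      have hs' : s ∈ Icc (0:ℝ) T := hsub hs
      haveI := hμprob s hs'
      have hφs : 0 ≤ φ s := le_trans (norm_nonneg _) (hφ s hs' (X s))
      have hPDE := hhPDE s hs' (X s)
      have heq : fderiv ℝ F (s, X s) (1, v s (X s))
          = (∫ y, ContinuousLinearMap.adjoint (fderiv ℝ w (X s - y)) (h s y) ∂ μ s)
            - (∫ y, ContinuousLinearMap.adjoint (fderiv ℝ w (X s - y)) (h s (X s)) ∂ μ s) := by
        rw [hdec s (X s) (v s (X s))]
        set A := deriv (fun τ => h τ (X s)) s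
        set Bq := fderiv ℝ (h s) (X s) (∫ y, w (X s - y) ∂ μ s)
        set I₁ := ∫ y, ContinuousLinearMap.adjoint (fderiv ℝ w (X s - y)) (h s y) ∂ μ s
        set I₂ := ∫ y, ContinuousLinearMap.adjoint (fderiv ℝ w (X s - y)) (h s (X s)) ∂ μ s
        have : A + Bq = (A + Bq - I₁ + I₂) + (I₁ - I₂) := by abel
        rw [this, hPDE, zero_add]
      rw [heq]
      have hb1 : ∀ (z : Euc d) (y : Euc d),
          ‖ContinuousLinearMap.adjoint (fderiv ℝ w (X s - y)) z‖ ≤ C_bdd * ‖z‖ := by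
        intro z y
        refine (ContinuousLinearMap.le_opNorm _ _).trans ?_
        refine mul_le_mul ?_ le_rfl (norm_nonneg _) hC
        rw [LinearIsometryEquiv.norm_map ContinuousLinearMap.adjoint]
        exact hwJ _
      have hI₁ : ‖∫ y, ContinuousLinearMap.adjoint (fderiv ℝ w (X s - y)) (h s y) ∂ μ s‖
          ≤ C_bdd * φ s := by
        refine (norm_integral_le_of_norm_le (integrable_const (C_bdd * φ s))
          (ae_of_all _ fun y => ?_)).trans (by simp [measure_univ])
        exact (hb1 _ y).trans (by
          have := hφ s hs' y
          nlinarith [norm_nonneg (h s y)])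
      have hI₂ : ‖∫ y, ContinuousLinearMap.adjoint (fderiv ℝ w (X s - y)) (h s (X s)) ∂ μ s‖
          ≤ C_bdd * φ s := by
        refine (norm_integral_le_of_norm_le (integrable_const (C_bdd * φ s))
          (ae_of_all _ fun y => ?_)).trans (by simp [measure_univ])
        exact (hb1 _ y).trans (by
          have := hφ s hs' (X s)
          nlinarith [norm_nonneg (h s (X s))])
      calc ‖(∫ y, ContinuousLinearMap.adjoint (fderiv ℝ w (X s - y)) (h s y) ∂ μ s)
            - (∫ y, ContinuousLinearMap.adjoint (fderiv ℝ w (X s - y)) (h s (X s)) ∂ μ s)‖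
          ≤ _ + _ := norm_sub_le _ _
        _ ≤ C_bdd * φ s + C_bdd * φ s := add_le_add hI₁ hI₂
        _ = 2 * C_bdd * φ s := by ring
    -- put everything together
    have hintnorm : ‖∫ s in t₀..T, fderiv ℝ F (s, X s) (1, v s (X s))‖
        ≤ ∫ s in t₀..T, 2 * C_bdd * φ s := by
      refine (intervalIntegral.norm_integral_le_integral_norm ht₀T).trans ?_
      refine intervalIntegral.integral_mono_on ht₀T ?_ ?_ hnorm
      · exact (hdXcont.norm).intervalIntegrable_of_Icc ht₀T
      · exact ((continuous_const.mul hφc).intervalIntegrable _ _)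
    have hTbound : ‖h T (X T)‖ ≤ S := by rw [hhT]; exact hSle _
    have hfinal : ‖h t₀ (X t₀)‖ ≤ S + 2 * C_bdd * ∫ s in t₀..T, φ s := by
      have hrepr : h t₀ (X t₀) = h T (X T) - (h T (X T) - h t₀ (X t₀)) := by abel
      calc ‖h t₀ (X t₀)‖ = ‖h T (X T) - (h T (X T) - h t₀ (X t₀))‖ := by rw [← hrepr]
        _ ≤ ‖h T (X T)‖ + ‖h T (X T) - h t₀ (X t₀)‖ := norm_sub_le _ _
        _ ≤ S + ∫ s in t₀..T, 2 * C_bdd * φ s := by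
            refine add_le_add hTbound ?_
            rw [← hFTC]; exact hintnorm
        _ = S + 2 * C_bdd * ∫ s in t₀..T, φ s := by
            rw [intervalIntegral.integral_const_mul]
    rwa [hX0] at hfinal
  -- iterate the estimate
  have main : ∀ n : ℕ, ∀ t ∈ Icc (0:ℝ) T, ∀ x : Euc d,
      ‖h t x‖ ≤ S * (∑ k ∈ Finset.range n, (2*C_bdd*(T - t))^k / (Nat.factorial k : ℝ))
        + B * ((2*C_bdd*(T - t))^n / (Nat.factorial n : ℝ)) := by
    intro n
    induction n with
    | zero => intro t ht x; simpa using hB t ht x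
    | succ n ih =>
      intro t ht x
      set φ : ℝ → ℝ := fun s => S * (∑ k ∈ Finset.range n, (2*C_bdd*(T - s))^k / (Nat.factorial k : ℝ))
        + B * ((2*C_bdd*(T - s))^n / (Nat.factorial n : ℝ)) with hφdef
      have hφc : Continuous φ := by
        apply Continuous.add
        · exact continuous_const.mul (continuous_finset_sum _ fun k _ =>
            ((continuous_const.mul (continuous_const.sub continuous_id)).pow k).div_const _)
        · exact continuous_const.mul
            (((continuous_const.mul (continuous_const.sub continuous_id)).pow n).div_const _)
      have hkey := key t ht x φ hφc ih
      have hpow : ∀ k : ℕ, ∫ s in t..T, (2*C_bdd*(T - s))^k / (Nat.factorial k : ℝ)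
          = (2*C_bdd)^k * ((T - t)^(k+1) / ((k:ℝ)+1)) / (Nat.factorial k : ℝ) := by
        intro k
        have h1 : (fun s : ℝ => (2*C_bdd*(T - s))^k / (Nat.factorial k : ℝ))
            = fun s => ((2*C_bdd)^k / (Nat.factorial k : ℝ)) * (T - s)^k := by
          funext s; rw [mul_pow]; ring
        rw [h1, intervalIntegral.integral_const_mul,
          intervalIntegral.integral_comp_sub_left (fun u : ℝ => u ^ k) T, sub_self,
          integral_pow, zero_pow (Nat.succ_ne_zero k), sub_zero]
        push_cast
        ring
      have hIφ : ∫ s in t..T, φ s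
          = S * (∑ k ∈ Finset.range n, (2*C_bdd)^k * ((T - t)^(k+1)/((k:ℝ)+1)) / (Nat.factorial k : ℝ))
            + B * ((2*C_bdd)^n * ((T - t)^(n+1)/((n:ℝ)+1)) / (Nat.factorial n : ℝ)) := by
        have hc1 : ∀ k : ℕ, Continuous fun s : ℝ => (2*C_bdd*(T - s))^k / (Nat.factorial k : ℝ) :=
          fun k => ((continuous_const.mul (continuous_const.sub continuous_id)).pow k).div_const _
        rw [hφdef]
        rw [intervalIntegral.integral_add
            (f := fun s => S * ∑ k ∈ Finset.range n, (2*C_bdd*(T - s))^k / (Nat.factorial k : ℝ))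
            (g := fun s => B * ((2*C_bdd*(T - s))^n / (Nat.factorial n : ℝ)))
            ((continuous_const.mul (continuous_finset_sum _ fun k _ => hc1 k)).intervalIntegrable _ _)
            ((continuous_const.mul (hc1 n)).intervalIntegrable _ _),
          intervalIntegral.integral_const_mul, intervalIntegral.integral_const_mul,
          intervalIntegral.integral_finset_sum (fun k _ => (hc1 k).intervalIntegrable _ _)]
        simp only [hpow]
      have hterm : ∀ k : ℕ, (2*C_bdd*(T - t))^(k+1)/((Nat.factorial (k+1) : ℕ) : ℝ)
          = 2*C_bdd * ((2*C_bdd)^k * ((T - t)^(k+1)/((k:ℝ)+1)) / (Nat.factorial k : ℝ)) := by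
        intro k
        have hk : ((Nat.factorial k : ℕ) : ℝ) ≠ 0 := Nat.cast_ne_zero.2 (Nat.factorial_ne_zero k)
        have hk1 : ((k:ℝ)+1) ≠ 0 := by positivity
        rw [Nat.factorial_succ, mul_pow, pow_succ]
        push_cast
        field_simp
      have hfin : S + 2*C_bdd*(S * (∑ k ∈ Finset.range n,
            (2*C_bdd)^k * ((T - t)^(k+1)/((k:ℝ)+1)) / (Nat.factorial k : ℝ))
          + B * ((2*C_bdd)^n * ((T - t)^(n+1)/((n:ℝ)+1)) / (Nat.factorial n : ℝ)))
          = S * (∑ k ∈ Finset.range (n+1), (2*C_bdd*(T - t))^k / (Nat.factorial k : ℝ))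
            + B * ((2*C_bdd*(T - t))^(n+1) / ((Nat.factorial (n+1) : ℕ) : ℝ)) := by
        rw [Finset.sum_range_succ']
        simp only [hterm]
        rw [← Finset.mul_sum]
        simp only [pow_zero, Nat.factorial_zero, Nat.cast_one]
        ring
      calc ‖h t x‖ ≤ S + 2 * C_bdd * ∫ s in t..T, φ s := hkey
        _ = S * (∑ k ∈ Finset.range (n+1), (2*C_bdd*(T - t))^k / (Nat.factorial k : ℝ))
            + B * ((2*C_bdd*(T - t))^(n+1) / ((Nat.factorial (n+1) : ℕ) : ℝ)) := by rw [hIφ]; exact hfin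
  -- pass to the limit
  intro t ht x
  set r : ℝ := 2*C_bdd*(T - t) with hrdef
  have hsum : HasSum (fun k : ℕ => r^k / (Nat.factorial k : ℝ)) (Real.exp r) := by
    rw [Real.exp_eq_exp_ℝ]
    exact NormedSpace.expSeries_div_hasSum_exp r
  have h1 := hsum.tendsto_sum_nat
  have h2 := FloorSemiring.tendsto_pow_div_factorial_atTop (K := ℝ) r
  have h3 : Filter.Tendsto
      (fun n : ℕ => S * (∑ k ∈ Finset.range n, r^k/(Nat.factorial k : ℝ)) + B * (r^n/(Nat.factorial n : ℝ)))
      Filter.atTop (nhds (S * Real.exp r + B * 0)) :=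
    (h1.const_mul S).add (h2.const_mul B)
  have h4 : ‖h t x‖ ≤ S * Real.exp r + B * 0 :=
    ge_of_tendsto' h3 (fun n => main n t ht x)
  rw [mul_zero, add_zero, mul_comm] at h4
  exact h4
end
end

section
/- Let d ≥ 1, T > 0, and N ≥ 1. Let w : ℝ^d → ℝ^d be continuously differentiable with sup_x ‖Dw(x)‖ ≤ C_bdd (operator norm of the Jacobian). Let X_1, …, X_N : [0,T] → ℝ^d be differentiable with X_i'(t) = (1/N) Σ_{j≠i} w(X_i(t) − X_j(t)) for all t ∈ [0,T]. Let H_1, …, H_N : [0,T] → ℝ^d be continuous, and let v_1, …, v_N : [0,T] → ℝ^d be continuously differentiable with v_i(T) = 0 and, for all t ∈ [0,T], v_i'(t) = (1/N) Σ_{j=1}^N (Dw(X_i(t) − X_j(t)))ᵀ ( v_j(t) − v_i(t) ) + H_i(t). Then for every t ∈ [0,T]: (1/N) Σ_{i=1}^N ‖v_i(t)‖ ≤ e^{2 C_bdd T} ∫_t^T (1/N) Σ_{i=1}^N ‖H_i(s)‖ ds. -/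
open MeasureTheory Set Finset
open scoped RealInnerProductSpace BigOperators

noncomputable section

/-- FTC helper: derivative of `t ↦ ∫ s in t..T, f s` for continuous `f`. -/
lemma hasDerivAt_integral_left_of_continuous {f : ℝ → ℝ} (hf : Continuous f) (T a : ℝ) :
    HasDerivAt (fun u => ∫ s in u..T, f s) (-f a) a :=
  intervalIntegral.integral_hasDerivAt_left (hf.intervalIntegrable a T)
    (hf.stronglyMeasurableAtFilter _ _) hf.continuousAt

set_option maxHeartbeats 1000000 in
/-- (Lemma B.2.) A Grönwall estimate for the coupled linear ODE system
satisfied by the difference of adjoint states along the particle trajectories: the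
particle-averaged magnitude at time `t` is controlled by the time-integrated
particle-averaged source. -/
theorem particle_adjoint_difference_gronwall
    (d : ℕ) (hd : 1 ≤ d) (T : ℝ) (hT : 0 < T) (N : ℕ) (hN : 1 ≤ N)
    (w : Euc d → Euc d) (hw : ContDiff ℝ 1 w)
    (C_bdd : ℝ)
    (hwJ : ∀ x : Euc d, ‖fderiv ℝ w x‖ ≤ C_bdd)
    (X : Fin N → ℝ → Euc d)
    (hX : ∀ i, ∀ t ∈ Icc (0 : ℝ) T,
      HasDerivAt (X i)
        ((N : ℝ)⁻¹ • ∑ j ∈ univ.erase i, w (X i t - X j t)) t)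
    (H : Fin N → ℝ → Euc d) (hH : ∀ i, Continuous (H i))
    (v : Fin N → ℝ → Euc d)
    (hv : ∀ i, ContDiff ℝ 1 (v i))
    (hvT : ∀ i, v i T = 0)
    (hvODE : ∀ i, ∀ t ∈ Icc (0 : ℝ) T,
      HasDerivAt (v i)
        ((N : ℝ)⁻¹ • ∑ j : Fin N,
            ContinuousLinearMap.adjoint
              (fderiv ℝ w (X i t - X j t)) (v j t - v i t)
          + H i t) t) :
    ∀ t ∈ Icc (0 : ℝ) T,
      (N : ℝ)⁻¹ * ∑ i : Fin N, ‖v i t‖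
        ≤ Real.exp (2 * C_bdd * T)
            * ∫ s in t..T, (N : ℝ)⁻¹ * ∑ i : Fin N, ‖H i s‖ := by
  have hC : 0 ≤ C_bdd := le_trans (norm_nonneg _) (hwJ 0)
  have hNne : (N : ℝ) ≠ 0 := Nat.cast_ne_zero.2 (by omega)
  obtain ⟨φ, hφdef⟩ : ∃ φ : ℝ → ℝ, φ = fun t => ∑ i : Fin N, ‖v i t‖ := ⟨_, rfl⟩
  obtain ⟨ψ, hψdef⟩ : ∃ ψ : ℝ → ℝ, ψ = fun t => ∑ i : Fin N, ‖H i t‖ := ⟨_, rfl⟩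
  obtain ⟨g, hgdef⟩ : ∃ g : Fin N → ℝ → Euc d, g = fun i s =>
      (N : ℝ)⁻¹ • ∑ j : Fin N,
          ContinuousLinearMap.adjoint (fderiv ℝ w (X i s - X j s)) (v j s - v i s)
        + H i s := ⟨_, rfl⟩
  have hφc : Continuous φ := by
    rw [hφdef]; exact continuous_finset_sum _ fun i _ => ((hv i).continuous).norm
  have hψc : Continuous ψ := by
    rw [hψdef]; exact continuous_finset_sum _ fun i _ => (hH i).norm
  have hψ0 : ∀ s, 0 ≤ ψ s := by
    rw [hψdef]; exact fun s => Finset.sum_nonneg fun i _ => norm_nonneg _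
  have hφ0 : ∀ s, 0 ≤ φ s := by
    rw [hφdef]; exact fun s => Finset.sum_nonneg fun i _ => norm_nonneg _
  have hvODE' : ∀ i, ∀ s ∈ Icc (0 : ℝ) T, HasDerivAt (v i) (g i s) s := by
    rw [hgdef]; exact hvODE
  -- continuity of trajectories on the time interval
  have hXc : ∀ i, ContinuousOn (X i) (Icc 0 T) := fun i s hs =>
    ((hX i s hs).differentiableAt.continuousAt).continuousWithinAt
  have hfdc : Continuous (fun y : Euc d => fderiv ℝ w y) :=
    (hw.fderiv_right (m := 0) le_rfl).continuous
  have hgc : ∀ i, ContinuousOn (g i) (Icc 0 T) := by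
    rw [hgdef]
    intro i
    apply ContinuousOn.add
    · refine ContinuousOn.const_smul (?_ : ContinuousOn (fun s => ∑ j : Fin N,
          ContinuousLinearMap.adjoint (fderiv ℝ w (X i s - X j s)) (v j s - v i s)) _) ((N : ℝ)⁻¹)
      apply continuousOn_finset_sum
      intro j _
      apply ContinuousOn.clm_apply
      · exact (((ContinuousLinearMap.adjoint (𝕜 := ℝ) (E := Euc d) (F := Euc d)
          ).continuous.comp hfdc).comp_continuousOn ((hXc i).sub (hXc j)))
      · exact ((hv j).continuous.sub (hv i).continuous).continuousOn
    · exact (hH i).continuousOn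
  -- pointwise bound on the sum of the norms of the right-hand sides
  have hgbound : ∀ s, (∑ i : Fin N, ‖g i s‖) ≤ 2 * C_bdd * φ s + ψ s := by
    intro s
    rw [hgdef, hφdef, hψdef]
    have hterm : ∀ i j : Fin N,
        ‖ContinuousLinearMap.adjoint (fderiv ℝ w (X i s - X j s)) (v j s - v i s)‖
          ≤ C_bdd * (‖v j s‖ + ‖v i s‖) := by
      intro i j
      calc ‖ContinuousLinearMap.adjoint (fderiv ℝ w (X i s - X j s)) (v j s - v i s)‖
          ≤ ‖ContinuousLinearMap.adjoint (fderiv ℝ w (X i s - X j s))‖ * ‖v j s - v i s‖ :=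
            ContinuousLinearMap.le_opNorm _ _
        _ ≤ C_bdd * (‖v j s‖ + ‖v i s‖) := by
            apply mul_le_mul _ (norm_sub_le _ _) (norm_nonneg _) hC
            rw [LinearIsometryEquiv.norm_map]
            exact hwJ _
    have hsumj : ∀ i : Fin N, ∑ j : Fin N, C_bdd * (‖v j s‖ + ‖v i s‖)
        = C_bdd * (∑ j : Fin N, ‖v j s‖) + N * (C_bdd * ‖v i s‖) := by
      intro i
      simp only [mul_add, Finset.sum_add_distrib, Finset.sum_const, Finset.card_univ,
        Fintype.card_fin, nsmul_eq_mul, ← Finset.mul_sum]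
    have hgi : ∀ i : Fin N,
        ‖(N : ℝ)⁻¹ • ∑ j : Fin N,
            ContinuousLinearMap.adjoint (fderiv ℝ w (X i s - X j s)) (v j s - v i s)
          + H i s‖
          ≤ (N : ℝ)⁻¹ * (C_bdd * (∑ j : Fin N, ‖v j s‖) + N * (C_bdd * ‖v i s‖))
            + ‖H i s‖ := by
      intro i
      have h1 : ‖(N : ℝ)⁻¹ • ∑ j : Fin N,
            ContinuousLinearMap.adjoint (fderiv ℝ w (X i s - X j s)) (v j s - v i s)
          + H i s‖ ≤ (N : ℝ)⁻¹ *
          ‖∑ j : Fin N, ContinuousLinearMap.adjoint (fderiv ℝ w (X i s - X j s))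
            (v j s - v i s)‖ + ‖H i s‖ := by
        refine (norm_add_le _ _).trans ?_
        rw [norm_smul, Real.norm_eq_abs, abs_of_nonneg (by positivity)]
      refine h1.trans ?_
      gcongr
      refine (norm_sum_le _ _).trans ?_
      calc ∑ j : Fin N, ‖ContinuousLinearMap.adjoint (fderiv ℝ w (X i s - X j s))
            (v j s - v i s)‖
          ≤ ∑ j : Fin N, C_bdd * (‖v j s‖ + ‖v i s‖) :=
            Finset.sum_le_sum fun j _ => hterm i j
        _ = C_bdd * (∑ j : Fin N, ‖v j s‖) + N * (C_bdd * ‖v i s‖) := hsumj i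
    calc (∑ i : Fin N, ‖(N : ℝ)⁻¹ • ∑ j : Fin N,
            ContinuousLinearMap.adjoint (fderiv ℝ w (X i s - X j s)) (v j s - v i s)
          + H i s‖)
        ≤ ∑ i : Fin N, ((N : ℝ)⁻¹ * (C_bdd * (∑ j : Fin N, ‖v j s‖)
            + N * (C_bdd * ‖v i s‖)) + ‖H i s‖) :=
          Finset.sum_le_sum fun i _ => hgi i
      _ = 2 * C_bdd * (∑ i : Fin N, ‖v i s‖) + ∑ i : Fin N, ‖H i s‖ := by
          rw [Finset.sum_add_distrib]
          simp only [mul_add, Finset.sum_add_distrib, Finset.sum_const, Finset.card_univ,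
            Fintype.card_fin, nsmul_eq_mul, ← Finset.mul_sum]
          field_simp
          ring
  -- Step 1: integral inequality
  have step1 : ∀ t ∈ Icc (0 : ℝ) T, φ t ≤ ∫ s in t..T, (2 * C_bdd * φ s + ψ s) := by
    intro t ht
    have htT : t ≤ T := ht.2
    have hsub : Icc t T ⊆ Icc 0 T := Icc_subset_Icc ht.1 le_rfl
    have huIcc : uIcc t T = Icc t T := uIcc_of_le htT
    have hint : ∀ i, IntervalIntegrable (g i) volume t T := by
      intro i
      apply ContinuousOn.intervalIntegrable
      rw [huIcc]; exact (hgc i).mono hsub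
    have heq : ∀ i, (∫ s in t..T, g i s) = v i T - v i t := by
      intro i
      refine intervalIntegral.integral_eq_sub_of_hasDerivAt (fun s hs => ?_) (hint i)
      exact hvODE' i s (hsub (huIcc ▸ hs))
    have hnorm : ∀ i, ‖v i t‖ ≤ ∫ s in t..T, ‖g i s‖ := by
      intro i
      have h2 : ‖v i t‖ = ‖∫ s in t..T, g i s‖ := by
        rw [heq i, hvT i, zero_sub, norm_neg]
      rw [h2]
      exact intervalIntegral.norm_integral_le_integral_norm htT
    have hintn : ∀ i, IntervalIntegrable (fun s => ‖g i s‖) volume t T := fun i => (hint i).norm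
    have hφt : φ t ≤ ∑ i : Fin N, ∫ s in t..T, ‖g i s‖ := by
      rw [hφdef]; exact Finset.sum_le_sum fun i _ => hnorm i
    refine hφt.trans ?_
    rw [← intervalIntegral.integral_finset_sum (fun i _ => hintn i)]
    have hi1 : IntervalIntegrable (fun s => ∑ i : Fin N, ‖g i s‖) volume t T := by
      apply ContinuousOn.intervalIntegrable
      rw [huIcc]
      exact continuousOn_finset_sum _ fun i _ => ((hgc i).mono hsub).norm
    have hi2 : IntervalIntegrable (fun s => 2 * C_bdd * φ s + ψ s) volume t T :=
      ((continuous_const.mul hφc).add hψc).intervalIntegrable t T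
    exact intervalIntegral.integral_mono_on htT hi1 hi2 (fun s _ => hgbound s)
  -- Step 2: Grönwall
  obtain ⟨A, hAdef⟩ : ∃ A : ℝ → ℝ, A = fun t => ∫ s in t..T, φ s := ⟨_, rfl⟩
  obtain ⟨B, hBdef⟩ : ∃ B : ℝ → ℝ, B = fun t => ∫ s in t..T, ψ s := ⟨_, rfl⟩
  obtain ⟨E, hEdef⟩ : ∃ E : ℝ → ℝ, E = fun t => Real.exp (2 * C_bdd * t) := ⟨_, rfl⟩
  obtain ⟨K, hKdef⟩ : ∃ K : ℝ → ℝ,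
      K = fun t => E t * (2 * C_bdd * A t + B t) + ∫ s in (0:ℝ)..t, E s * ψ s := ⟨_, rfl⟩
  have hEc : Continuous E := by
    rw [hEdef]; exact (Real.continuous_exp.comp (continuous_const.mul continuous_id))
  have hA' : ∀ a, HasDerivAt A (-(φ a)) a := by
    rw [hAdef]; exact fun a => hasDerivAt_integral_left_of_continuous hφc T a
  have hB' : ∀ a, HasDerivAt B (-(ψ a)) a := by
    rw [hBdef]; exact fun a => hasDerivAt_integral_left_of_continuous hψc T a
  have hE' : ∀ a, HasDerivAt E (2 * C_bdd * E a) a := by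
    intro a
    rw [hEdef]
    simpa [mul_comm] using ((hasDerivAt_id a).const_mul (2 * C_bdd)).exp
  have hK' : ∀ a, HasDerivAt K (2 * C_bdd * (E a * (2 * C_bdd * A a + B a - φ a))) a := by
    rw [hKdef]
    intro a
    have h2 : HasDerivAt (fun t => ∫ s in (0:ℝ)..t, E s * ψ s) (E a * ψ a) a :=
      intervalIntegral.integral_hasDerivAt_right
        ((hEc.mul hψc).intervalIntegrable _ _)
        ((hEc.mul hψc).stronglyMeasurableAtFilter _ _) (hEc.mul hψc).continuousAt
    have h3 : HasDerivAt
        (fun t => E t * (2 * C_bdd * A t + B t) + ∫ s in (0:ℝ)..t, E s * ψ s)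
        (2 * C_bdd * E a * (2 * C_bdd * A a + B a)
          + E a * (2 * C_bdd * -(φ a) + -(ψ a)) + E a * ψ a) a := by
      have h1 := (hE' a).mul (((hA' a).const_mul (2 * C_bdd)).add (hB' a))
      exact h1.add h2
    have heq : 2 * C_bdd * (E a * (2 * C_bdd * A a + B a - φ a))
        = 2 * C_bdd * E a * (2 * C_bdd * A a + B a)
          + E a * (2 * C_bdd * -(φ a) + -(ψ a)) + E a * ψ a := by ring
    rw [heq]
    exact h3
  have hKmono : MonotoneOn K (Icc 0 T) := by
    apply monotoneOn_of_deriv_nonneg (convex_Icc 0 T)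
    · exact (fun x _ => ((hK' x).differentiableAt).continuousAt.continuousWithinAt)
    · intro x hx
      exact ((hK' x).differentiableAt).differentiableWithinAt
    · intro x hx
      rw [interior_Icc] at hx
      rw [(hK' x).deriv]
      have hx' : x ∈ Icc (0:ℝ) T := Ioo_subset_Icc_self hx
      have hb : φ x ≤ 2 * C_bdd * A x + B x := by
        have hs1 := step1 x hx'
        rw [intervalIntegral.integral_add (f := fun s => 2 * C_bdd * φ s) (g := ψ) ((continuous_const.mul hφc).intervalIntegrable _ _)
          (hψc.intervalIntegrable _ _), intervalIntegral.integral_const_mul] at hs1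
        rw [hAdef, hBdef]
        exact hs1
      have hnn : 0 ≤ 2 * C_bdd * A x + B x - φ x := by linarith
      have hE0 : 0 ≤ E x := by rw [hEdef]; positivity
      exact mul_nonneg (by linarith) (mul_nonneg hE0 hnn)
  -- use monotonicity
  intro t ht
  have hKle : K t ≤ K T := hKmono ht (right_mem_Icc.2 hT.le) ht.2
  have hAT : A T = 0 := by rw [hAdef]; exact intervalIntegral.integral_same
  have hBT : B T = 0 := by rw [hBdef]; exact intervalIntegral.integral_same
  have hsplit : (∫ s in (0:ℝ)..T, E s * ψ s)
      = (∫ s in (0:ℝ)..t, E s * ψ s) + ∫ s in t..T, E s * ψ s :=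
    (intervalIntegral.integral_add_adjacent_intervals
      ((hEc.mul hψc).intervalIntegrable _ _) ((hEc.mul hψc).intervalIntegrable _ _)).symm
  have hmain : E t * (2 * C_bdd * A t + B t) ≤ ∫ s in t..T, E s * ψ s := by
    rw [hKdef] at hKle
    simp only [hAT, hBT, mul_zero, add_zero, zero_add] at hKle
    rw [hsplit] at hKle
    linarith [hKle]
  have hEbound : (∫ s in t..T, E s * ψ s) ≤ Real.exp (2 * C_bdd * T) * B t := by
    rw [hBdef]
    simp only
    rw [← intervalIntegral.integral_const_mul]
    apply intervalIntegral.integral_mono_on ht.2 ((hEc.mul hψc).intervalIntegrable _ _)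
      ((continuous_const.mul hψc).intervalIntegrable _ _)
    intro s hs
    apply mul_le_mul_of_nonneg_right _ (hψ0 s)
    rw [hEdef]
    exact Real.exp_le_exp.2 (by nlinarith [hs.2])
  have hE1 : 1 ≤ E t := by
    rw [hEdef]; exact Real.one_le_exp (mul_nonneg (by linarith) ht.1)
  have hb : φ t ≤ 2 * C_bdd * A t + B t := by
    have hs1 := step1 t ht
    rw [intervalIntegral.integral_add (f := fun s => 2 * C_bdd * φ s) (g := ψ) ((continuous_const.mul hφc).intervalIntegrable _ _)
      (hψc.intervalIntegrable _ _), intervalIntegral.integral_const_mul] at hs1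
    rw [hAdef, hBdef]
    exact hs1
  have hfinal : φ t ≤ Real.exp (2 * C_bdd * T) * B t := by
    have h0 : 0 ≤ 2 * C_bdd * A t + B t := le_trans (hφ0 t) hb
    calc φ t ≤ 2 * C_bdd * A t + B t := hb
      _ ≤ E t * (2 * C_bdd * A t + B t) := le_mul_of_one_le_left h0 hE1
      _ ≤ ∫ s in t..T, E s * ψ s := hmain
      _ ≤ Real.exp (2 * C_bdd * T) * B t := hEbound
  have hrw : (∫ s in t..T, (N : ℝ)⁻¹ * ∑ i : Fin N, ‖H i s‖) = (N : ℝ)⁻¹ * B t := by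
    rw [hBdef]
    simp only [hψdef]
    exact intervalIntegral.integral_const_mul _ _
  rw [hrw]
  have hφt : (∑ i : Fin N, ‖v i t‖) = φ t := by rw [hφdef]
  rw [hφt]
  calc (N : ℝ)⁻¹ * φ t ≤ (N : ℝ)⁻¹ * (Real.exp (2 * C_bdd * T) * B t) :=
        mul_le_mul_of_nonneg_left hfinal (by positivity)
    _ = Real.exp (2 * C_bdd * T) * ((N : ℝ)⁻¹ * B t) := by ring
end
end
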